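/- arXiv:math/0005180 — 12 statements merged into one kernel-verified Lean document; each statement's English description precedes it below -/
import Mathlib

section
/- The number of valleyless permutations of length n equals 2^{n-1}, the number of compositions of n. -/
/-- A sequence (here: a permutation word `π 0, …, π (n-1)`) is valleyless if no entry is
strictly below some earlier entry and some later entry. -/
def PermValleyless {n : ℕ} (π : Equiv.Perm (Fin n)) : Prop :=
  ∀ i j k : Fin n, i < j → j < k → min (π i) (π k) ≤ π j

namespace ValleylessAux

variable {n m : ℕ}

lemma compl_card (S : Finset (Fin n)) : Sᶜ.card = n - S.card := by
  rw [Finset.card_compl, Fintype.card_fin]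

/-- The word: sorted `S`, followed by reverse-sorted `Sᶜ`. -/
def buildF (S : Finset (Fin n)) (i : Fin n) : Fin n :=
  if h : (i : ℕ) < S.card then S.orderEmbOfFin rfl ⟨i, h⟩
  else Sᶜ.orderEmbOfFin (compl_card S) ⟨n - 1 - i, by have := i.isLt; omega⟩

lemma buildF_mem_lt (S : Finset (Fin n)) (i : Fin n) (h : (i : ℕ) < S.card) :
    buildF S i ∈ S := by
  rw [buildF, dif_pos h]; exact Finset.orderEmbOfFin_mem ..

lemma buildF_mem_ge (S : Finset (Fin n)) (i : Fin n) (h : ¬ (i : ℕ) < S.card) :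
    buildF S i ∈ Sᶜ := by
  rw [buildF, dif_neg h]; exact Finset.orderEmbOfFin_mem ..

lemma buildF_injective (S : Finset (Fin n)) : Function.Injective (buildF S) := by
  intro i j hEq
  by_cases hi : (i : ℕ) < S.card <;> by_cases hj : (j : ℕ) < S.card
  · simp only [buildF] at hEq
    rw [dif_pos hi, dif_pos hj] at hEq
    have h2 : (i : ℕ) = (j : ℕ) := by
      simpa using congrArg Fin.val ((S.orderEmbOfFin rfl).injective hEq)
    exact Fin.ext h2
  · exact absurd (buildF_mem_lt S i hi) (by rw [hEq]; exact Finset.mem_compl.mp (buildF_mem_ge S j hj))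
  · exact absurd (buildF_mem_lt S j hj) (by rw [← hEq]; exact Finset.mem_compl.mp (buildF_mem_ge S i hi))
  · simp only [buildF] at hEq
    rw [dif_neg hi, dif_neg hj] at hEq
    have := (Sᶜ.orderEmbOfFin (compl_card S)).injective hEq
    have h2 : n - 1 - (i : ℕ) = n - 1 - (j : ℕ) := congrArg Fin.val this
    have hi2 := i.isLt; have hj2 := j.isLt
    exact Fin.ext (by omega)

/-- The unimodal permutation associated to a subset. -/
noncomputable def buildPerm (S : Finset (Fin n)) : Equiv.Perm (Fin n) :=
  Equiv.ofBijective (buildF S) (Finite.injective_iff_bijective.mp (buildF_injective S))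

lemma buildPerm_apply (S : Finset (Fin n)) (i : Fin n) : buildPerm S i = buildF S i := rfl

lemma buildPerm_valleyless (S : Finset (Fin n)) : PermValleyless (buildPerm S) := by
  intro i j k hij hjk
  by_cases hj : (j : ℕ) < S.card
  · have hi : (i : ℕ) < S.card := lt_trans (by exact_mod_cast hij) hj
    have h1 : buildPerm S i < buildPerm S j := by
      rw [buildPerm_apply, buildPerm_apply, buildF, buildF, dif_pos hi, dif_pos hj]
      exact (S.orderEmbOfFin rfl).strictMono (Fin.mk_lt_mk.mpr (Fin.lt_def.mp hij))
    exact le_trans (min_le_left _ _) h1.le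
  · have hk : ¬ (k : ℕ) < S.card := by
      have : (j : ℕ) < (k : ℕ) := hjk
      omega
    have h1 : buildPerm S k < buildPerm S j := by
      rw [buildPerm_apply, buildPerm_apply, buildF, buildF, dif_neg hj, dif_neg hk]
      refine (Sᶜ.orderEmbOfFin (compl_card S)).strictMono (Fin.mk_lt_mk.mpr ?_)
      have hjk' := Fin.lt_def.mp hjk
      have hk2 := k.isLt
      omega
    exact le_trans (min_le_right _ _) h1.le

lemma mono_of_valleyless (π : Equiv.Perm (Fin (m + 1))) (hv : PermValleyless π)
    {i j : Fin (m + 1)} (hij : i < j) (hjp : j ≤ π.symm (Fin.last m)) : π i < π j := by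
  have hne : π i ≠ π j := fun h => absurd (π.injective h) (ne_of_lt hij)
  rcases lt_or_gt_of_ne hne with h | h
  · exact h
  · exfalso
    rcases eq_or_lt_of_le hjp with hjp' | hjp'
    · have hlast : π j = Fin.last m := by rw [hjp', Equiv.apply_symm_apply]
      exact absurd (hlast ▸ Fin.le_last (π i)) (not_le.mpr h)
    · have h2 := hv i j _ hij hjp'
      rw [Equiv.apply_symm_apply, min_eq_left (Fin.le_last _)] at h2
      exact absurd h2 (not_le.mpr h)

lemma anti_of_valleyless (π : Equiv.Perm (Fin (m + 1))) (hv : PermValleyless π)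
    {i j : Fin (m + 1)} (hpi : π.symm (Fin.last m) ≤ i) (hij : i < j) : π j < π i := by
  have hne : π j ≠ π i := fun h => absurd (π.injective h) (ne_of_gt hij)
  rcases lt_or_gt_of_ne hne with h | h
  · exact h
  · exfalso
    rcases eq_or_lt_of_le hpi with hpi' | hpi'
    · have hlast : π i = Fin.last m := by rw [← hpi', Equiv.apply_symm_apply]
      exact absurd (hlast ▸ Fin.le_last (π j)) (not_le.mpr h)
    · have h2 := hv _ i j hpi' hij
      rw [Equiv.apply_symm_apply, min_eq_right (Fin.le_last _)] at h2
      exact absurd h2 (not_le.mpr h)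

/-- The set of values occurring (weakly) before the maximum value. -/
def peakSet (π : Equiv.Perm (Fin (m + 1))) : Finset (Fin (m + 1)) :=
  Finset.image π (Finset.Iic (π.symm (Fin.last m)))

lemma last_mem_peakSet (π : Equiv.Perm (Fin (m + 1))) : Fin.last m ∈ peakSet π :=
  Finset.mem_image.mpr ⟨_, Finset.mem_Iic.mpr le_rfl, π.apply_symm_apply _⟩

lemma peakSet_card (π : Equiv.Perm (Fin (m + 1))) :
    (peakSet π).card = (π.symm (Fin.last m) : ℕ) + 1 := by
  rw [peakSet, Finset.card_image_of_injective _ π.injective, Fin.card_Iic]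

lemma build_peak (π : Equiv.Perm (Fin (m + 1))) (hv : PermValleyless π) :
    buildPerm (peakSet π) = π := by
  set p := π.symm (Fin.last m) with hp
  set S := peakSet π with hS
  have hcard : S.card = (p : ℕ) + 1 := peakSet_card π
  apply Equiv.ext
  intro i
  rw [buildPerm_apply, buildF]
  split_ifs with h
  · -- increasing part
    have hle : S.card ≤ m + 1 := by rw [hcard]; exact p.isLt
    have hf := Finset.orderEmbOfFin_unique (s := S)
      (f := fun x : Fin S.card => π ⟨(x : ℕ), lt_of_lt_of_le x.isLt hle⟩) rfl
      (fun x => by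
        refine Finset.mem_image.mpr ⟨⟨(x : ℕ), lt_of_lt_of_le x.isLt hle⟩, ?_, rfl⟩
        have hx : (x : ℕ) < (p : ℕ) + 1 := lt_of_lt_of_eq x.isLt hcard
        have hxp : (x : ℕ) ≤ (p : ℕ) := by omega
        exact Finset.mem_Iic.mpr (Fin.le_def.mpr hxp))
      (fun x y hxy => by
        refine mono_of_valleyless π hv (Fin.mk_lt_mk.mpr (Fin.lt_def.mp hxy)) ?_
        have hy : (y : ℕ) < (p : ℕ) + 1 := lt_of_lt_of_eq y.isLt hcard
        have hyp : (y : ℕ) ≤ (p : ℕ) := by omega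
        exact Fin.le_def.mpr hyp)
    have := congrFun hf ⟨(i : ℕ), h⟩
    simp only at this
    rw [← this]
  · -- decreasing part
    have hcc : Sᶜ.card = m + 1 - S.card := compl_card S
    have hg := Finset.orderEmbOfFin_unique (s := Sᶜ)
      (f := fun x : Fin (m + 1 - S.card) => π ⟨m - (x : ℕ), by omega⟩) (compl_card S)
      (fun x => by
        have hx := x.isLt
        refine Finset.mem_compl.mpr ?_
        intro hmem
        obtain ⟨b, hb, hb2⟩ := Finset.mem_image.mp hmem
        have := π.injective hb2
        have hbval : (b : ℕ) = m - (x : ℕ) := congrArg Fin.val this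
        have hbp : (b : ℕ) ≤ (p : ℕ) := Fin.le_def.mp (Finset.mem_Iic.mp hb)
        have hpl := p.isLt
        omega)
      (fun x y hxy => by
        have hx := x.isLt; have hy := y.isLt
        have hxy' : (x : ℕ) < (y : ℕ) := Fin.lt_def.mp hxy
        have hpl := p.isLt
        refine anti_of_valleyless π hv (i := ⟨m - (y : ℕ), by omega⟩) (j := ⟨m - (x : ℕ), by omega⟩)
          (Fin.le_def.mpr (by show (p : ℕ) ≤ m - (y : ℕ); omega))
          (Fin.lt_def.mpr (by show m - (y : ℕ) < m - (x : ℕ); omega)))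
    have hil := i.isLt
    have := congrFun hg ⟨m + 1 - 1 - (i : ℕ), by omega⟩
    simp only at this
    rw [← this]
    congr 1
    exact Fin.ext (by show m - (m + 1 - 1 - (i : ℕ)) = (i : ℕ); omega)

lemma peak_build (S : Finset (Fin (m + 1))) (hS : Fin.last m ∈ S) :
    peakSet (buildPerm S) = S := by
  have hne : S.Nonempty := ⟨_, hS⟩
  have hpos : 0 < S.card := Finset.card_pos.mpr hne
  have hle : S.card ≤ m + 1 := by
    have := Finset.card_le_univ S
    simpa using this
  have hlast : buildPerm S ⟨S.card - 1, by omega⟩ = Fin.last m := by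
    rw [buildPerm_apply, buildF, dif_pos (by simp only; omega)]
    have h1 : S.orderEmbOfFin rfl ⟨S.card - 1, Nat.sub_lt hpos (Nat.succ_pos 0)⟩ =
        S.max' hne := Finset.orderEmbOfFin_last rfl hpos
    have h2 : S.max' hne = Fin.last m :=
      le_antisymm (Fin.le_last _) (S.le_max' _ hS)
    rw [← h2, ← h1]
  have hsymm : (buildPerm S).symm (Fin.last m) = ⟨S.card - 1, by omega⟩ :=
    (Equiv.symm_apply_eq _).mpr hlast.symm
  apply Finset.eq_of_subset_of_card_le
  · intro x hx
    obtain ⟨b, hb, hb2⟩ := Finset.mem_image.mp hx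
    rw [hsymm] at hb
    have hb' : (b : ℕ) ≤ S.card - 1 := Fin.le_def.mp (Finset.mem_Iic.mp hb)
    rw [← hb2]
    exact buildF_mem_lt S b (by omega)
  · rw [peakSet_card, hsymm]
    simp only
    omega

noncomputable def valleyEquiv (m : ℕ) :
    {π : Equiv.Perm (Fin (m + 1)) // PermValleyless π} ≃
      {S : Finset (Fin (m + 1)) // Fin.last m ∈ S} where
  toFun π := ⟨peakSet π.1, last_mem_peakSet _⟩
  invFun S := ⟨buildPerm S.1, buildPerm_valleyless _⟩
  left_inv π := Subtype.ext (build_peak π.1 π.2)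
  right_inv S := Subtype.ext (peak_build S.1 S.2)

lemma card_subsets (m : ℕ) :
    Nat.card {S : Finset (Fin (m + 1)) // Fin.last m ∈ S} = 2 ^ m := by
  rw [Nat.card_eq_fintype_card]
  have e : {S : Finset (Fin (m + 1)) // Fin.last m ∈ S} ≃
      {S : Finset (Fin (m + 1)) // ¬ Fin.last m ∈ S} :=
    { toFun := fun S => ⟨S.1ᶜ, by simp [S.2]⟩
      invFun := fun S => ⟨S.1ᶜ, by simpa using S.2⟩
      left_inv := fun S => Subtype.ext (compl_compl _)
      right_inv := fun S => Subtype.ext (compl_compl _) }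
  have h1 := Fintype.card_congr e
  have h2 : Fintype.card {S : Finset (Fin (m + 1)) // ¬ Fin.last m ∈ S} =
      Fintype.card (Finset (Fin (m + 1))) -
        Fintype.card {S : Finset (Fin (m + 1)) // Fin.last m ∈ S} :=
    Fintype.card_subtype_compl _
  have h3 : Fintype.card (Finset (Fin (m + 1))) = 2 ^ (m + 1) := by
    rw [Fintype.card_finset, Fintype.card_fin]
  have h4 : Fintype.card {S : Finset (Fin (m + 1)) // Fin.last m ∈ S} ≤
      Fintype.card (Finset (Fin (m + 1))) := Fintype.card_subtype_le _
  have h5 : 2 ^ (m + 1) = 2 * 2 ^ m := by ring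
  omega

/-! ### Compositions -/

def glist : List ℕ → Bool × List ℕ
  | [] => (true, [])
  | a :: t => if a = 1 then (true, t) else (false, (a - 1) :: t)

lemma glist_spec (k : ℕ) (l : List ℕ) (hpos : ∀ x ∈ l, 0 < x) (hsum : l.sum = k + 2) :
    (∀ x ∈ (glist l).2, 0 < x) ∧ (glist l).2.sum = k + 1 := by
  match l with
  | [] => simp at hsum
  | a :: t =>
    have ha : 0 < a := hpos a (by simp)
    have ht : ∀ x ∈ t, 0 < x := fun x hx => hpos x (by simp [hx])
    rw [List.sum_cons] at hsum
    by_cases h1 : a = 1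
    · simp only [glist, if_pos h1]
      exact ⟨ht, by omega⟩
    · simp only [glist, if_neg h1]
      constructor
      · intro x hx
        rcases List.mem_cons.mp hx with rfl | hx
        · omega
        · exact ht x hx
      · rw [List.sum_cons]; omega

lemma glist_inj (l l' : List ℕ) (hl : ∀ x ∈ l, 0 < x) (hl' : ∀ x ∈ l', 0 < x)
    (hne : l ≠ []) (hne' : l' ≠ []) (h : glist l = glist l') : l = l' := by
  match l, l' with
  | [], _ => exact absurd rfl hne
  | _ :: _, [] => exact absurd rfl hne'
  | a :: t, a' :: t' =>
    have ha : 0 < a := hl a (by simp)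
    have ha' : 0 < a' := hl' a' (by simp)
    simp only [glist] at h
    by_cases h1 : a = 1 <;> by_cases h1' : a' = 1
    · rw [if_pos h1, if_pos h1'] at h
      have h3 : t = t' := congrArg Prod.snd h
      rw [h1, h1', h3]
    · rw [if_pos h1, if_neg h1'] at h
      have h2 : True = False := by simpa using congrArg Prod.fst h
      simp at h2
    · rw [if_neg h1, if_pos h1'] at h
      have h2 : False = True := by simpa using congrArg Prod.fst h
      simp at h2
    · rw [if_neg h1, if_neg h1'] at h
      have h3 : (a - 1) :: t = (a' - 1) :: t' := congrArg Prod.snd h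
      simp only [List.cons.injEq] at h3
      obtain ⟨h4, h5⟩ := h3
      have h6 : a = a' := by omega
      rw [h6, h5]

def compMap (k : ℕ) (l : {l : List ℕ // (∀ x ∈ l, 0 < x) ∧ l.sum = k + 2}) :
    Bool × {l : List ℕ // (∀ x ∈ l, 0 < x) ∧ l.sum = k + 1} :=
  ((glist l.1).1, ⟨(glist l.1).2, glist_spec k l.1 l.2.1 l.2.2⟩)

lemma comp_ne_nil {k : ℕ} {l : List ℕ} (h : l.sum = k + 1) : l ≠ [] := by
  rintro rfl; simp at h

lemma compMap_bijective (k : ℕ) : Function.Bijective (compMap k) := by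
  constructor
  · rintro ⟨l, hl⟩ ⟨l', hl'⟩ h
    have h1 : glist l = glist l' := by
      have hA := congrArg Prod.fst h
      have hB := congrArg (fun x => (Prod.snd x).1) h
      simp only [compMap] at hA hB
      exact Prod.ext hA hB
    exact Subtype.ext (glist_inj l l' hl.1 hl'.1
      (comp_ne_nil (k := k + 1) hl.2) (comp_ne_nil (k := k + 1) hl'.2) h1)
  · rintro ⟨b, m, hm⟩
    by_cases hb : b = true
    · refine ⟨⟨1 :: m, ⟨?_, ?_⟩⟩, ?_⟩
      · intro x hx
        rcases List.mem_cons.mp hx with rfl | hx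
        · omega
        · exact hm.1 x hx
      · rw [List.sum_cons, hm.2]
        omega
      · subst hb
        simp [compMap, glist]
    · match m, hm with
      | [], hm => exact absurd hm.2 (by simp)
      | a :: t, hm =>
        have ha : 0 < a := hm.1 a (by simp)
        refine ⟨⟨(a + 1) :: t, ⟨?_, ?_⟩⟩, ?_⟩
        · intro x hx
          rcases List.mem_cons.mp hx with rfl | hx
          · omega
          · exact hm.1 x (by simp [hx])
        · rw [List.sum_cons]
          have := hm.2
          rw [List.sum_cons] at this
          omega
        · have hb' : b = false := by simpa using hb
          subst hb'
          simp only [compMap, glist, if_neg (by omega : ¬ a + 1 = 1)]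
          refine Prod.ext rfl (Subtype.ext ?_)
          simp

lemma comp_one (l : List ℕ) (hpos : ∀ x ∈ l, 0 < x) (hsum : l.sum = 1) : l = [1] := by
  match l with
  | [] => simp at hsum
  | a :: t =>
    have ha : 0 < a := hpos a (by simp)
    rw [List.sum_cons] at hsum
    have ht : t = [] := by
      match t with
      | [] => rfl
      | b :: r =>
        have hb : 0 < b := hpos b (by simp)
        rw [List.sum_cons] at hsum
        omega
    subst ht
    simp only [List.sum_nil] at hsum
    have h1 : a = 1 := by omega
    rw [h1]

lemma comp_card : ∀ k : ℕ, 1 ≤ k →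
    Nat.card {l : List ℕ // (∀ x ∈ l, 0 < x) ∧ l.sum = k} = 2 ^ (k - 1) := by
  intro k hk
  induction k, hk using Nat.le_induction with
  | base =>
    show Nat.card {l : List ℕ // (∀ x ∈ l, 0 < x) ∧ l.sum = 1} = 1
    rw [Nat.card_eq_one_iff_unique]
    constructor
    · constructor
      rintro ⟨l, hl⟩ ⟨l', hl'⟩
      exact Subtype.ext ((comp_one l hl.1 hl.2).trans (comp_one l' hl'.1 hl'.2).symm)
    · exact ⟨⟨[1], by simp⟩⟩
  | succ k hk ih =>
    obtain ⟨j, rfl⟩ : ∃ j, k = j + 1 := ⟨k - 1, by omega⟩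
    have h1 : Nat.card {l : List ℕ // (∀ x ∈ l, 0 < x) ∧ l.sum = j + 2} =
        Nat.card (Bool × {l : List ℕ // (∀ x ∈ l, 0 < x) ∧ l.sum = j + 1}) :=
      Nat.card_congr (Equiv.ofBijective _ (compMap_bijective j))
    rw [h1, Nat.card_prod, Nat.card_eq_fintype_card, Fintype.card_bool]
    simp only [Nat.add_sub_cancel] at ih ⊢
    rw [ih]
    ring

end ValleylessAux

/-- The number of valleyless permutations of length `n` equals the number of compositions
of `n`, namely `2^(n-1)`. -/
theorem valleyless_perm_count (n : ℕ) (hn : 1 ≤ n) :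
    Nat.card {π : Equiv.Perm (Fin n) // PermValleyless π} =
      Nat.card {l : List ℕ // (∀ x ∈ l, 0 < x) ∧ l.sum = n} ∧
    Nat.card {π : Equiv.Perm (Fin n) // PermValleyless π} = 2 ^ (n - 1) := by
  obtain ⟨m, rfl⟩ : ∃ m, n = m + 1 := ⟨n - 1, by omega⟩
  have hperm : Nat.card {π : Equiv.Perm (Fin (m + 1)) // PermValleyless π} = 2 ^ m := by
    rw [Nat.card_congr (ValleylessAux.valleyEquiv m), ValleylessAux.card_subsets]
  have hcomp := ValleylessAux.comp_card (m + 1) (by omega)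
  simp only [Nat.add_sub_cancel] at hcomp ⊢
  exact ⟨hperm.trans hcomp.symm, hperm⟩
end

section
/- A permutation π of {1,...,n} is valleyless if and only if its inversion table (a_1,...,a_n) satisfies: for each k, a_k = 0 or a_k = n - k, where a_k is the number of symbols to the left of k in the word π_1...π_n that are greater than k. -/
/-- Inversion table entry for the symbol `k` (0-indexed; symbol `k` stands for `k+1`):
the number of positions to the left of `k` in the word holding a symbol greater than `k`. -/
def invTable {n : ℕ} (π : Equiv.Perm (Fin n)) (k : Fin n) : ℕ :=
  (Finset.univ.filter (fun i : Fin n => i < π.symm k ∧ k < π i)).card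

/-!
The symbols larger than `k` occupy exactly `n - 1 - k` positions, and `a_k` counts those to the
left of `k`. So `a_k = 0` says they all lie to the right of `k`, and `a_k = n - 1 - k` says they
all lie to its left. The word is valleyless iff no symbol `k` has larger symbols on both sides,
i.e. iff one of the two holds for every `k`.
-/

open Finset

section InversionTable

variable {n : ℕ} (π : Equiv.Perm (Fin n))

lemma card_filter_lt_apply (k : Fin n) : #{i | k < π i} = n - 1 - k := by
  rw [← Fin.card_Ioi, ← filter_lt_eq_Ioi]
  exact card_equiv π (by simp)

lemma invTable_add_card_filter_symm_lt (k : Fin n) :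
    invTable π k + #{i | π.symm k < i ∧ k < π i} = n - 1 - k := by
  have hright : #{i | π.symm k < i ∧ k < π i} = #{i ∈ {i | k < π i} | ¬i < π.symm k} := by
    rw [filter_filter]
    refine congrArg card (filter_congr fun i _ => ?_)
    have : i = π.symm k → ¬k < π i := by rintro rfl; simp
    grind
  rw [invTable, hright, ← card_filter_lt_apply π k,
    ← card_filter_add_card_filter_not (s := {i | k < π i}) (· < π.symm k)]
  simp only [filter_filter, and_comm]

lemma invTable_ne_zero_iff (k : Fin n) :
    invTable π k ≠ 0 ↔ ∃ i < π.symm k, k < π i := by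
  simp [invTable]

lemma invTable_ne_iff (k : Fin n) :
    invTable π k ≠ n - 1 - k ↔ ∃ i, π.symm k < i ∧ k < π i := by
  rw [← invTable_add_card_filter_symm_lt π k, ne_eq, left_eq_add, ← ne_eq, ← pos_iff_ne_zero,
    card_pos, filter_nonempty_iff]
  simp

end InversionTable

lemma permValleyless_iff_no_larger_on_both_sides {n : ℕ} (π : Equiv.Perm (Fin n)) :
    PermValleyless π ↔
      ∀ k, ¬((∃ i < π.symm k, k < π i) ∧ ∃ i, π.symm k < i ∧ k < π i) := by
  constructor
  · rintro h k ⟨⟨i, hi, hki⟩, j, hj, hkj⟩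
    have := h i _ j hi hj
    rw [π.apply_symm_apply] at this
    exact this.not_gt (lt_min hki hkj)
  · intro h i j k hij hjk
    by_contra! hlt
    exact h (π j) ⟨⟨i, by simpa using hij, (lt_min_iff.1 hlt).1⟩,
      k, by simpa using hjk, (lt_min_iff.1 hlt).2⟩

/-- A permutation is valleyless iff each inversion table entry `a_k` is `0` or `n - k`
(in 0-indexed form, `n - 1 - k`). -/
theorem valleyless_iff_invTable {n : ℕ} (π : Equiv.Perm (Fin n)) :
    PermValleyless π ↔ ∀ k : Fin n, invTable π k = 0 ∨ invTable π k = n - 1 - k.val := by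
  rw [permValleyless_iff_no_larger_on_both_sides]
  refine forall_congr' fun k => ?_
  rw [← invTable_ne_zero_iff, ← invTable_ne_iff]
  tauto
end

section
/- The sum over all valleyless permutations π of length n of q^{i(π)}, where i(π) is the number of inversions of π, equals the product (1+q)(1+q^2)···(1+q^{n-1}). -/
/-!
In a valleyless permutation the entry `0` stands at one of the two ends, since anywhere else
it would be a valley between the first and the last entry. Deleting it leaves a valleyless
permutation of length one less, and every valleyless permutation of length `n` arises from
exactly two of length `n + 1`: with `0` in front it loses no inversion, with `0` at the back
it loses `n`. Hence for `n ≥ 1` the generating function is multiplied by `1 + q ^ n`.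
-/

open Polynomial

instance {n : ℕ} : DecidablePred (PermValleyless (n := n)) := fun _ => by
  unfold PermValleyless; infer_instance

/-- The number of inversions of a permutation. -/
def invNum {n : ℕ} (π : Equiv.Perm (Fin n)) : ℕ :=
  (Finset.univ.filter (fun p : Fin n × Fin n => p.1 < p.2 ∧ π p.2 < π p.1)).card

open Finset Equiv

namespace Fin

variable {α β : Type*} [LinearOrder α] [LinearOrder β] {n : ℕ}

def IsValleyless (w : Fin n → α) : Prop :=
  ∀ i j k, i < j → j < k → min (w i) (w k) ≤ w j

def invCount (w : Fin n → α) : ℕ :=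
  #{p : Fin n × Fin n | p.1 < p.2 ∧ w p.2 < w p.1}

theorem isValleyless_comp_iff {f : α → β} (hf : StrictMono f) {w : Fin n → α} :
    IsValleyless (f ∘ w) ↔ IsValleyless w := by
  simp only [IsValleyless, Function.comp_apply, ← hf.monotone.map_min, hf.le_iff_le]

theorem IsValleyless.comp_strictMono {m : ℕ} {w : Fin n → α} (h : IsValleyless w)
    {e : Fin m → Fin n} (he : StrictMono e) : IsValleyless (w ∘ e) :=
  fun _ _ _ hij hjk => h _ _ _ (he hij) (he hjk)

theorem isValleyless_cons_iff {a : α} {w : Fin n → α} (ha : ∀ i, a ≤ w i) :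
    IsValleyless (cons a w : Fin (n + 1) → α) ↔ IsValleyless w := by
  refine ⟨fun h => h.comp_strictMono strictMono_succ, fun h i j k hij hjk => ?_⟩
  cases i using Fin.cases with
  | zero =>
    refine (min_le_left _ _).trans ?_
    cases j using Fin.cases <;> simp [ha]
  | succ i =>
    obtain ⟨j, rfl⟩ := exists_succ_eq_of_ne_zero (ne_zero_of_lt hij)
    obtain ⟨k, rfl⟩ := exists_succ_eq_of_ne_zero (ne_zero_of_lt hjk)
    simpa using h i j k (succ_lt_succ_iff.1 hij) (succ_lt_succ_iff.1 hjk)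

theorem isValleyless_snoc_iff {a : α} {w : Fin n → α} (ha : ∀ i, a ≤ w i) :
    IsValleyless (snoc w a : Fin (n + 1) → α) ↔ IsValleyless w := by
  refine ⟨fun h => by simpa using h.comp_strictMono strictMono_castSucc,
    fun h i j k hij hjk => ?_⟩
  cases k using Fin.lastCases with
  | last =>
    refine (min_le_right _ _).trans ?_
    cases j using Fin.lastCases <;> simp [ha]
  | cast k =>
    obtain ⟨j, rfl⟩ := exists_castSucc_eq.2 (ne_last_of_lt hjk)
    obtain ⟨i, rfl⟩ := exists_castSucc_eq.2 (ne_last_of_lt hij)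
    simpa using h i j k (castSucc_lt_castSucc_iff.1 hij) (castSucc_lt_castSucc_iff.1 hjk)

theorem IsValleyless.eq_zero_or_eq_last {w : Fin (n + 1) → α} (h : IsValleyless w)
    (hw : Function.Injective w) {j : Fin (n + 1)} (hj : ∀ i, w j ≤ w i) :
    j = 0 ∨ j = last n := by
  by_contra! hne
  rcases min_le_iff.1 (h 0 j (last n) (pos_iff_ne_zero.2 hne.1) (lt_last_iff_ne_last.2 hne.2))
    with h0 | hl
  · exact hne.1 (hw ((hj 0).antisymm h0))
  · exact hne.2 (hw ((hj _).antisymm hl))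

theorem invCount_eq_sum (w : Fin n → α) :
    invCount w = ∑ i, ∑ j, if i < j ∧ w j < w i then 1 else 0 := by
  rw [invCount, card_filter, Fintype.sum_prod_type]

theorem invCount_comp {f : α → β} (hf : StrictMono f) (w : Fin n → α) :
    invCount (f ∘ w) = invCount w := by
  simp only [invCount, Function.comp_apply, hf.lt_iff_lt]

theorem invCount_cons (a : α) (w : Fin n → α) :
    invCount (cons a w : Fin (n + 1) → α) = #{j | w j < a} + invCount w := by
  rw [invCount_eq_sum, invCount_eq_sum, card_filter]
  simp only [sum_univ_succ, cons_zero, cons_succ, succ_lt_succ_iff, succ_pos, lt_irrefl,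
    not_lt_zero]
  simp

theorem invCount_snoc (w : Fin n → α) (a : α) :
    invCount (snoc w a : Fin (n + 1) → α) = invCount w + #{i | a < w i} := by
  rw [invCount_eq_sum, invCount_eq_sum, card_filter]
  simp only [sum_univ_castSucc, snoc_castSucc, snoc_last, castSucc_lt_castSucc_iff,
    castSucc_lt_last, lt_irrefl, fun i : Fin n => (castSucc_lt_last i).not_gt]
  simp [sum_add_distrib]

end Fin

section InsertZero

variable {n : ℕ}

theorem permValleyless_iff_isValleyless {π : Perm (Fin n)} :
    PermValleyless π ↔ Fin.IsValleyless ⇑π :=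
  Iff.rfl

theorem invNum_eq_invCount (π : Perm (Fin n)) : invNum π = Fin.invCount ⇑π :=
  rfl

def permConsZero (σ : Perm (Fin n)) : Perm (Fin (n + 1)) :=
  Perm.decomposeFin.symm (0, σ)

def permSnocZero (σ : Perm (Fin n)) : Perm (Fin (n + 1)) :=
  permConsZero σ * finRotate (n + 1)

theorem coe_permConsZero (σ : Perm (Fin n)) :
    ⇑(permConsZero σ) = Fin.cons 0 (Fin.succ ∘ σ) := by
  funext i
  cases i using Fin.cases <;>
    simp [permConsZero, Perm.decomposeFin_symm_apply_zero, Perm.decomposeFin_symm_apply_succ]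

theorem coe_permSnocZero (σ : Perm (Fin n)) :
    ⇑(permSnocZero σ) = Fin.snoc (Fin.succ ∘ σ) 0 := by
  rw [Fin.snoc_eq_cons_rotate, ← coe_permConsZero, permSnocZero, Perm.coe_mul]
  rfl

theorem permConsZero_injective : Function.Injective (permConsZero (n := n)) :=
  Perm.decomposeFin.symm.injective.comp (Prod.mk_right_injective 0)

theorem permSnocZero_injective : Function.Injective (permSnocZero (n := n)) :=
  (mul_left_injective _).comp permConsZero_injective

theorem exists_permConsZero_eq {π : Perm (Fin (n + 1))} (h : π 0 = 0) :
    ∃ σ, permConsZero σ = π := by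
  obtain ⟨⟨p, σ⟩, rfl⟩ := Perm.decomposeFin.symm.surjective π
  rw [Perm.decomposeFin_symm_apply_zero] at h
  exact ⟨σ, by rw [h]; rfl⟩

theorem exists_permSnocZero_eq {π : Perm (Fin (n + 1))} (h : π (Fin.last n) = 0) :
    ∃ σ, permSnocZero σ = π := by
  have hrot : (finRotate (n + 1))⁻¹ 0 = Fin.last n :=
    (finRotate _).symm_apply_eq.2 finRotate_last.symm
  obtain ⟨σ, hσ⟩ := exists_permConsZero_eq (π := π * (finRotate (n + 1))⁻¹)
    (by rw [Perm.mul_apply, hrot, h])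
  exact ⟨σ, by rw [permSnocZero, hσ, inv_mul_cancel_right]⟩

theorem permValleyless_permConsZero_iff {σ : Perm (Fin n)} :
    PermValleyless (permConsZero σ) ↔ PermValleyless σ := by
  rw [permValleyless_iff_isValleyless, permValleyless_iff_isValleyless, coe_permConsZero,
    Fin.isValleyless_cons_iff (fun _ => Fin.zero_le _),
    Fin.isValleyless_comp_iff Fin.strictMono_succ]

theorem permValleyless_permSnocZero_iff {σ : Perm (Fin n)} :
    PermValleyless (permSnocZero σ) ↔ PermValleyless σ := by
  rw [permValleyless_iff_isValleyless, permValleyless_iff_isValleyless, coe_permSnocZero,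
    Fin.isValleyless_snoc_iff (fun _ => Fin.zero_le _),
    Fin.isValleyless_comp_iff Fin.strictMono_succ]

theorem invNum_permConsZero (σ : Perm (Fin n)) : invNum (permConsZero σ) = invNum σ := by
  simp [invNum_eq_invCount, coe_permConsZero, Fin.invCount_cons,
    Fin.invCount_comp Fin.strictMono_succ]

theorem invNum_permSnocZero (σ : Perm (Fin n)) : invNum (permSnocZero σ) = invNum σ + n := by
  simp [invNum_eq_invCount, coe_permSnocZero, Fin.invCount_snoc,
    Fin.invCount_comp Fin.strictMono_succ]

end InsertZero

section GeneratingFunction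

variable {n : ℕ}

theorem PermValleyless.apply_zero_eq_zero_or_apply_last_eq_zero {π : Perm (Fin (n + 1))}
    (h : PermValleyless π) : π 0 = 0 ∨ π (Fin.last n) = 0 := by
  have hmin : ∀ i, π (π.symm 0) ≤ π i := by simp
  rcases (permValleyless_iff_isValleyless.1 h).eq_zero_or_eq_last π.injective hmin with h0 | hl
  exacts [.inl (π.symm_apply_eq.1 h0).symm, .inr (π.symm_apply_eq.1 hl).symm]

theorem sum_permValleyless_succ {M : Type*} [AddCommMonoid M] (hn : n ≠ 0)
    (f : Perm (Fin (n + 1)) → M) :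
    ∑ π with PermValleyless π, f π =
      ∑ σ : Perm (Fin n) with PermValleyless σ, f (permConsZero σ) +
        ∑ σ : Perm (Fin n) with PermValleyless σ, f (permSnocZero σ) := by
  rw [← sum_image permConsZero_injective.injOn, ← sum_image permSnocZero_injective.injOn,
    ← sum_union]
  · congr 1
    ext π
    simp only [mem_filter, mem_univ, true_and, mem_union, mem_image]
    refine ⟨fun hπ => ?_, ?_⟩
    · rcases hπ.apply_zero_eq_zero_or_apply_last_eq_zero with h | h
      · obtain ⟨σ, rfl⟩ := exists_permConsZero_eq h
        exact .inl ⟨σ, permValleyless_permConsZero_iff.1 hπ, rfl⟩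
      · obtain ⟨σ, rfl⟩ := exists_permSnocZero_eq h
        exact .inr ⟨σ, permValleyless_permSnocZero_iff.1 hπ, rfl⟩
    · rintro (⟨σ, hσ, rfl⟩ | ⟨σ, hσ, rfl⟩)
      exacts [permValleyless_permConsZero_iff.2 hσ, permValleyless_permSnocZero_iff.2 hσ]
  · simp only [disjoint_left, mem_image]
    rintro _ ⟨σ, -, rfl⟩ ⟨τ, -, hτ⟩
    have h0 : permConsZero σ 0 = 0 := by simp [coe_permConsZero]
    have hl : permSnocZero τ (Fin.last n) = 0 := by simp [coe_permSnocZero]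
    rw [hτ, ← h0] at hl
    exact hn (by simpa using congrArg Fin.val ((permConsZero σ).injective hl))

theorem invNum_one : invNum (1 : Perm (Fin n)) = 0 := by
  rw [invNum, card_eq_zero, filter_eq_empty_iff]
  exact fun _ _ h => lt_asymm h.1 h.2

variable {R : Type*} [CommSemiring R]

theorem sum_pow_invNum_permValleyless_of_le_one (q : R) (hn : n ≤ 1) :
    ∑ π : Perm (Fin n) with PermValleyless π, q ^ invNum π = 1 := by
  have : Subsingleton (Fin n) := Fin.subsingleton_iff_le_one.2 hn
  have hV : PermValleyless (1 : Perm (Fin n)) :=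
    fun i j _ hij _ => absurd hij (Subsingleton.elim i j ▸ lt_irrefl i)
  rw [(eq_singleton_iff_unique_mem.2 ⟨mem_filter.2 ⟨mem_univ _, hV⟩,
    fun π _ => Subsingleton.elim π 1⟩), sum_singleton, invNum_one, pow_zero]

theorem sum_pow_invNum_permValleyless_succ (q : R) (hn : n ≠ 0) :
    ∑ π : Perm (Fin (n + 1)) with PermValleyless π, q ^ invNum π =
      (1 + q ^ n) * ∑ σ : Perm (Fin n) with PermValleyless σ, q ^ invNum σ := by
  simp only [sum_permValleyless_succ hn, invNum_permConsZero, invNum_permSnocZero, pow_add,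
    ← sum_mul, add_mul, one_mul, mul_comm (q ^ n)]

theorem sum_pow_invNum_permValleyless (q : R) (n : ℕ) :
    ∑ π : Perm (Fin n) with PermValleyless π, q ^ invNum π =
      ∏ i ∈ range (n - 1), (1 + q ^ (i + 1)) := by
  rcases n with _ | n
  · exact sum_pow_invNum_permValleyless_of_le_one q (Nat.zero_le 1)
  induction n with
  | zero => exact sum_pow_invNum_permValleyless_of_le_one q le_rfl
  | succ n ih =>
    rw [sum_pow_invNum_permValleyless_succ q n.succ_ne_zero, ih]
    simp only [Nat.add_sub_cancel, prod_range_succ, mul_comm]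

end GeneratingFunction

/-- `∑_{π valleyless} q^{i(π)} = (1+q)(1+q²)⋯(1+q^{n-1})`. -/
theorem valleyless_inversion_gf (n : ℕ) :
    ∑ π ∈ Finset.univ.filter (PermValleyless (n := n)),
        (X : ℤ[X]) ^ invNum π =
      ∏ i ∈ Finset.range (n - 1), (1 + (X : ℤ[X]) ^ (i + 1)) :=
  sum_pow_invNum_permValleyless X n
end

section
/- The map sending a valleyless permutation π of length n to the pair (π', ε), where π' is obtained by deleting the entry 1 (which lies at position 1 or n) and subtracting 1 from all remaining entries, and ε records whether 1 was at the beginning or end, is a bijection from valleyless permutations of length n+1 onto pairs of a valleyless permutation of length n and a Boolean. -/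
/-- A word `s 0, …, s (n-1)` is valleyless if no entry is strictly below
some earlier entry and some later entry. -/
def WordValleyless {n : ℕ} (s : Fin n → Fin n) : Prop :=
  ∀ i j k : Fin n, i < j → j < k → min (s i) (s k) ≤ s j

-- extension with 0 at front
def extT {n : ℕ} (σ : Fin n → Fin n) : Fin (n+1) → Fin (n+1) :=
  fun j => if h : j.val = 0 then 0 else (σ ⟨j.val - 1, by have := j.isLt; omega⟩).succ

-- extension with 0 at back
def extF {n : ℕ} (σ : Fin n → Fin n) : Fin (n+1) → Fin (n+1) :=
  fun j => if h : j.val = n then 0 else (σ ⟨j.val, by have := j.isLt; omega⟩).succ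

lemma fin_le_iff {m : ℕ} (a b : Fin m) : a ≤ b ↔ a.val ≤ b.val := Iff.rfl
lemma fin_lt_iff {m : ℕ} (a b : Fin m) : a < b ↔ a.val < b.val := Iff.rfl

lemma min_le_of_vals {m : ℕ} (a b c : Fin m) (h : a.val ≤ c.val ∨ b.val ≤ c.val) :
    min a b ≤ c := by
  rcases h with h | h
  · exact le_trans (min_le_left a b) h
  · exact le_trans (min_le_right a b) h

lemma vals_of_min_le {m : ℕ} (a b c : Fin m) (h : min a b ≤ c) :
    a.val ≤ c.val ∨ b.val ≤ c.val := by
  rcases min_le_iff.mp h with h | h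
  · exact Or.inl h
  · exact Or.inr h

-- key lemma: 0 occurs at first or last position
lemma key {n : ℕ} (π : Fin (n+1) → Fin (n+1)) (hb : Function.Bijective π)
    (hv : WordValleyless π) (h0 : π 0 ≠ 0) : π (Fin.last n) = 0 := by
  obtain ⟨j, hj⟩ := hb.2 0
  by_contra hlast
  have hj0 : j ≠ 0 := fun h => h0 (h ▸ hj)
  have hjl : j ≠ Fin.last n := fun h => hlast (h ▸ hj)
  have hv0 : j.val ≠ 0 := fun h => hj0 (Fin.ext h)
  have hvl : j.val ≠ n := fun h => hjl (Fin.ext (by simpa using h))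
  have hjlt := j.isLt
  have h1 : (0 : Fin (n+1)) < j := by
    rw [fin_lt_iff, Fin.val_zero]; omega
  have h2 : j < Fin.last n := by
    rw [fin_lt_iff, Fin.val_last]; omega
  have := vals_of_min_le _ _ _ (hv 0 j (Fin.last n) h1 h2)
  rw [hj] at this
  simp only [Fin.val_zero, Nat.le_zero] at this
  rcases this with h | h
  · exact h0 (Fin.ext (by simpa using h))
  · exact hlast (Fin.ext (by simpa using h))

-- extT properties
lemma extT_bij {n : ℕ} (σ : Fin n → Fin n) (hb : Function.Bijective σ) :
    Function.Bijective (extT σ) := by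
  constructor
  · intro a b hab
    unfold extT at hab
    by_cases ha : a.val = 0 <;> by_cases hbv : b.val = 0
    · exact Fin.ext (by omega)
    · rw [dif_pos ha, dif_neg hbv] at hab
      have := congrArg Fin.val hab
      simp only [Fin.val_zero, Fin.val_succ] at this
      omega
    · rw [dif_neg ha, dif_pos hbv] at hab
      have := congrArg Fin.val hab
      simp only [Fin.val_zero, Fin.val_succ] at this
      omega
    · rw [dif_neg ha, dif_neg hbv] at hab
      have h1 : (σ ⟨a.val - 1, by have := a.isLt; omega⟩)
          = (σ ⟨b.val - 1, by have := b.isLt; omega⟩) := Fin.succ_injective _ hab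
      have := congrArg Fin.val (hb.1 h1)
      simp only at this
      exact Fin.ext (by omega)
  · intro y
    by_cases hy : y.val = 0
    · refine ⟨0, ?_⟩
      unfold extT
      rw [dif_pos (by simp)]
      exact Fin.ext (by simp [hy])
    · obtain ⟨i, hi⟩ := hb.2 ⟨y.val - 1, by have := y.isLt; omega⟩
      refine ⟨i.succ, ?_⟩
      unfold extT
      rw [dif_neg (by simp)]
      have h1 : (⟨(i.succ : Fin (n+1)).val - 1, by have := i.succ.isLt; omega⟩ : Fin n) = i :=
        Fin.ext (by simp)
      rw [h1, hi]
      exact Fin.ext (by simp [Fin.val_succ]; have := y.isLt; omega)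

lemma extT_valleyless {n : ℕ} (σ : Fin n → Fin n) (hv : WordValleyless σ) :
    WordValleyless (extT σ) := by
  intro i j k hij hjk
  by_cases hi : i.val = 0
  · apply min_le_of_vals
    left
    unfold extT
    rw [dif_pos hi]
    simp
  · have hj : j.val ≠ 0 := by rw [fin_lt_iff] at hij; omega
    have hk : k.val ≠ 0 := by rw [fin_lt_iff] at hjk hij; omega
    have hiL := i.isLt; have hjL := j.isLt; have hkL := k.isLt
    have h := hv ⟨i.val - 1, by omega⟩ ⟨j.val - 1, by omega⟩ ⟨k.val - 1, by omega⟩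
      (by rw [fin_lt_iff] at hij ⊢; simp only; omega)
      (by rw [fin_lt_iff] at hjk ⊢; simp only; omega)
    have h' := vals_of_min_le _ _ _ h
    apply min_le_of_vals
    unfold extT
    rw [dif_neg hi, dif_neg hj, dif_neg hk]
    simp only [Fin.val_succ]
    omega

lemma extF_bij {n : ℕ} (σ : Fin n → Fin n) (hb : Function.Bijective σ) :
    Function.Bijective (extF σ) := by
  constructor
  · intro a b hab
    unfold extF at hab
    by_cases ha : a.val = n <;> by_cases hbv : b.val = n
    · exact Fin.ext (by omega)
    · rw [dif_pos ha, dif_neg hbv] at hab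
      have := congrArg Fin.val hab
      simp only [Fin.val_zero, Fin.val_succ] at this
      omega
    · rw [dif_neg ha, dif_pos hbv] at hab
      have := congrArg Fin.val hab
      simp only [Fin.val_zero, Fin.val_succ] at this
      omega
    · rw [dif_neg ha, dif_neg hbv] at hab
      have h1 : (σ ⟨a.val, by have := a.isLt; omega⟩)
          = (σ ⟨b.val, by have := b.isLt; omega⟩) := Fin.succ_injective _ hab
      have := congrArg Fin.val (hb.1 h1)
      simp only at this
      exact Fin.ext (by omega)
  · intro y
    by_cases hy : y.val = 0
    · refine ⟨Fin.last n, ?_⟩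
      unfold extF
      rw [dif_pos (by simp)]
      exact Fin.ext (by simp [hy])
    · obtain ⟨i, hi⟩ := hb.2 ⟨y.val - 1, by have := y.isLt; omega⟩
      refine ⟨i.castSucc, ?_⟩
      unfold extF
      rw [dif_neg (by simp only [Fin.coe_castSucc]; have := i.isLt; omega)]
      have h1 : (⟨(i.castSucc : Fin (n+1)).val, by simp only [Fin.coe_castSucc]; exact i.isLt⟩
          : Fin n) = i := Fin.ext (by simp)
      rw [h1, hi]
      exact Fin.ext (by simp [Fin.val_succ]; have := y.isLt; omega)

lemma extF_valleyless {n : ℕ} (σ : Fin n → Fin n) (hv : WordValleyless σ) :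
    WordValleyless (extF σ) := by
  intro i j k hij hjk
  by_cases hk : k.val = n
  · apply min_le_of_vals
    right
    unfold extF
    rw [dif_pos hk]
    simp
  · have hkL := k.isLt
    have hj : j.val ≠ n := by rw [fin_lt_iff] at hjk; omega
    have hi : i.val ≠ n := by rw [fin_lt_iff] at hjk hij; omega
    have hiL := i.isLt; have hjL := j.isLt
    have h := hv ⟨i.val, by omega⟩ ⟨j.val, by omega⟩ ⟨k.val, by omega⟩
      (by rw [fin_lt_iff] at hij ⊢; simpa using hij)
      (by rw [fin_lt_iff] at hjk ⊢; simpa using hjk)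
    have h' := vals_of_min_le _ _ _ h
    apply min_le_of_vals
    unfold extF
    rw [dif_neg hi, dif_neg hj, dif_neg hk]
    simp only [Fin.val_succ]
    omega

-- deletion properties, true case (π 0 = 0)
lemma delT_ne {n : ℕ} (π : Fin (n+1) → Fin (n+1)) (hb : Function.Bijective π)
    (h0 : π 0 = 0) (i : Fin n) : (π i.succ).val ≠ 0 := by
  intro h
  have : π i.succ = π 0 := by rw [h0]; exact Fin.ext (by simpa using h)
  exact (Fin.succ_ne_zero i) (hb.1 this)

lemma delT_bij {n : ℕ} (π : Fin (n+1) → Fin (n+1)) (hb : Function.Bijective π)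
    (h0 : π 0 = 0) :
    Function.Bijective (fun i : Fin n =>
      (⟨(π i.succ).val - 1, by have := (π i.succ).isLt; have := i.isLt; omega⟩ : Fin n)) := by
  constructor
  · intro a b hab
    have h1 := delT_ne π hb h0 a
    have h2 := delT_ne π hb h0 b
    have hv := congrArg Fin.val hab
    simp only at hv
    have : π a.succ = π b.succ := Fin.ext (by omega)
    have := congrArg Fin.val (hb.1 this)
    simp only [Fin.val_succ] at this
    exact Fin.ext (by omega)
  · intro y
    obtain ⟨j, hj⟩ := hb.2 ⟨y.val + 1, by have := y.isLt; omega⟩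
    have hj0 : j.val ≠ 0 := by
      intro h
      have : j = 0 := Fin.ext h
      rw [this, h0] at hj
      have := congrArg Fin.val hj
      simp only [Fin.val_zero] at this
      omega
    refine ⟨⟨j.val - 1, by have := j.isLt; omega⟩, ?_⟩
    have hsucc : (⟨j.val - 1, by have := j.isLt; omega⟩ : Fin n).succ = j :=
      Fin.ext (by simp only [Fin.val_succ]; omega)
    apply Fin.ext
    simp only [hsucc, hj]
    omega

lemma delT_valleyless {n : ℕ} (π : Fin (n+1) → Fin (n+1)) (hb : Function.Bijective π)
    (h0 : π 0 = 0) (hv : WordValleyless π) :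
    WordValleyless (fun i : Fin n =>
      (⟨(π i.succ).val - 1, by have := (π i.succ).isLt; have := i.isLt; omega⟩ : Fin n)) := by
  intro i j k hij hjk
  have h := hv i.succ j.succ k.succ (by simpa using hij) (by simpa using hjk)
  have h' := vals_of_min_le _ _ _ h
  have h1 := delT_ne π hb h0 i
  have h2 := delT_ne π hb h0 j
  have h3 := delT_ne π hb h0 k
  apply min_le_of_vals
  simp only
  omega

-- deletion properties, false case (π last = 0)
lemma delF_ne {n : ℕ} (π : Fin (n+1) → Fin (n+1)) (hb : Function.Bijective π)
    (h0 : π (Fin.last n) = 0) (i : Fin n) : (π i.castSucc).val ≠ 0 := by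
  intro h
  have : π i.castSucc = π (Fin.last n) := by rw [h0]; exact Fin.ext (by simpa using h)
  have := congrArg Fin.val (hb.1 this)
  have hi := i.isLt
  simp only [Fin.coe_castSucc, Fin.val_last] at this
  omega

lemma delF_bij {n : ℕ} (π : Fin (n+1) → Fin (n+1)) (hb : Function.Bijective π)
    (h0 : π (Fin.last n) = 0) :
    Function.Bijective (fun i : Fin n =>
      (⟨(π i.castSucc).val - 1, by have := (π i.castSucc).isLt; have := i.isLt; omega⟩ : Fin n)) := by
  constructor
  · intro a b hab
    have h1 := delF_ne π hb h0 a
    have h2 := delF_ne π hb h0 b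
    have hv := congrArg Fin.val hab
    simp only at hv
    have : π a.castSucc = π b.castSucc := Fin.ext (by omega)
    have := congrArg Fin.val (hb.1 this)
    simp only [Fin.coe_castSucc] at this
    exact Fin.ext (by omega)
  · intro y
    obtain ⟨j, hj⟩ := hb.2 ⟨y.val + 1, by have := y.isLt; omega⟩
    have hjn : j.val ≠ n := by
      intro h
      have : j = Fin.last n := Fin.ext (by simpa using h)
      rw [this, h0] at hj
      have := congrArg Fin.val hj
      simp only [Fin.val_zero] at this
      omega
    refine ⟨⟨j.val, by have := j.isLt; omega⟩, ?_⟩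
    have hcs : (⟨j.val, by have := j.isLt; omega⟩ : Fin n).castSucc = j :=
      Fin.ext (by simp)
    apply Fin.ext
    simp only [hcs, hj]
    omega

lemma delF_valleyless {n : ℕ} (π : Fin (n+1) → Fin (n+1)) (hb : Function.Bijective π)
    (h0 : π (Fin.last n) = 0) (hv : WordValleyless π) :
    WordValleyless (fun i : Fin n =>
      (⟨(π i.castSucc).val - 1, by have := (π i.castSucc).isLt; have := i.isLt; omega⟩ : Fin n)) := by
  intro i j k hij hjk
  have h := hv i.castSucc j.castSucc k.castSucc (by simpa using hij) (by simpa using hjk)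
  have h' := vals_of_min_le _ _ _ h
  have h1 := delF_ne π hb h0 i
  have h2 := delF_ne π hb h0 j
  have h3 := delF_ne π hb h0 k
  apply min_le_of_vals
  simp only
  omega

/-- Deleting the symbol `1` (here the `Fin` value `0`, lying at the first or last position)
from a valleyless permutation of length `n+1`, subtracting one from the remaining entries and
recording by a Boolean whether `1` was at the beginning, is a bijection from valleyless
permutations of length `n+1` onto pairs of a valleyless permutation of length `n` and a
Boolean. -/
theorem valleyless_delete_bijection (n : ℕ) (hn : 1 ≤ n) :
    Set.BijOn
      (fun π : Fin (n + 1) → Fin (n + 1) =>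
        if π 0 = 0 then
          ((fun i : Fin n =>
            (⟨(π i.succ).val - 1, by have := (π i.succ).isLt; omega⟩ : Fin n)), true)
        else
          ((fun i : Fin n =>
            (⟨(π i.castSucc).val - 1, by have := (π i.castSucc).isLt; omega⟩ : Fin n)), false))
      {π | Function.Bijective π ∧ WordValleyless π}
      ({σ | Function.Bijective σ ∧ WordValleyless σ} ×ˢ (Set.univ : Set Bool)) := by
  refine ⟨?_, ?_, ?_⟩
  · -- MapsTo
    rintro π ⟨hb, hv⟩
    by_cases h0 : π 0 = 0
    · simp only [Set.mem_prod, Set.mem_setOf_eq, if_pos h0]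
      exact ⟨⟨delT_bij π hb h0, delT_valleyless π hb h0 hv⟩, trivial⟩
    · have hl := key π hb hv h0
      simp only [Set.mem_prod, Set.mem_setOf_eq, if_neg h0]
      exact ⟨⟨delF_bij π hb hl, delF_valleyless π hb hl hv⟩, trivial⟩
  · -- InjOn
    rintro π₁ ⟨hb₁, hv₁⟩ π₂ ⟨hb₂, hv₂⟩ heq
    by_cases h₁ : π₁ 0 = 0 <;> by_cases h₂ : π₂ 0 = 0
    · simp only [if_pos h₁, if_pos h₂, Prod.mk.injEq] at heq
      funext j
      by_cases hj : j.val = 0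
      · rw [show j = 0 from Fin.ext hj, h₁, h₂]
      · have hjL := j.isLt
        set i : Fin n := ⟨j.val - 1, by omega⟩ with hi
        have hsucc : i.succ = j := Fin.ext (by simp only [Fin.val_succ, hi]; omega)
        have hval := congrArg Fin.val (congrFun heq.1 i)
        simp only at hval
        have e1 := delT_ne π₁ hb₁ h₁ i
        have e2 := delT_ne π₂ hb₂ h₂ i
        rw [← hsucc]
        exact Fin.ext (by omega)
    · simp only [if_pos h₁, if_neg h₂, Prod.mk.injEq] at heq
      exact absurd heq.2 (by simp)
    · simp only [if_neg h₁, if_pos h₂, Prod.mk.injEq] at heq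
      exact absurd heq.2 (by simp)
    · have hl₁ := key π₁ hb₁ hv₁ h₁
      have hl₂ := key π₂ hb₂ hv₂ h₂
      simp only [if_neg h₁, if_neg h₂, Prod.mk.injEq] at heq
      funext j
      by_cases hj : j.val = n
      · rw [show j = Fin.last n from Fin.ext (by simpa using hj), hl₁, hl₂]
      · have hjL := j.isLt
        set i : Fin n := ⟨j.val, by omega⟩ with hi
        have hcs : i.castSucc = j := Fin.ext (by simp [hi])
        have hval := congrArg Fin.val (congrFun heq.1 i)
        simp only at hval
        have e1 := delF_ne π₁ hb₁ hl₁ i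
        have e2 := delF_ne π₂ hb₂ hl₂ i
        rw [← hcs]
        exact Fin.ext (by omega)
  · -- SurjOn
    rintro ⟨σ, b⟩ ⟨⟨hσb, hσv⟩, -⟩
    cases b with
    | true =>
      refine ⟨extT σ, ⟨extT_bij σ hσb, extT_valleyless σ hσv⟩, ?_⟩
      have h0 : extT σ 0 = 0 := by unfold extT; rw [dif_pos (by simp)]
      simp only [if_pos h0, Prod.mk.injEq]
      refine ⟨funext fun i => ?_, trivial⟩
      apply Fin.ext
      simp only
      unfold extT
      rw [dif_neg (by simp)]
      have h1 : (⟨(i.succ : Fin (n+1)).val - 1, by have := i.succ.isLt; omega⟩ : Fin n) = i :=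
        Fin.ext (by simp)
      rw [h1]
      simp
    | false =>
      refine ⟨extF σ, ⟨extF_bij σ hσb, extF_valleyless σ hσv⟩, ?_⟩
      have h0 : extF σ 0 ≠ 0 := by
        unfold extF
        rw [dif_neg (by simp only [Fin.val_zero]; omega)]
        intro h
        have := congrArg Fin.val h
        simp only [Fin.val_succ, Fin.val_zero] at this; omega
      simp only [if_neg h0, Prod.mk.injEq]
      refine ⟨funext fun i => ?_, trivial⟩
      apply Fin.ext
      simp only
      unfold extF
      rw [dif_neg (by simp only [Fin.coe_castSucc]; have := i.isLt; omega)]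
      have h1 : (⟨(i.castSucc : Fin (n+1)).val, by simp only [Fin.coe_castSucc]; exact i.isLt⟩
          : Fin n) = i := Fin.ext (by simp)
      rw [h1]
      simp
end

section
/- The number of valleyless sequences of length n of positive integers with maximum entry exactly k is the binomial coefficient C(n - 1 + 2(k-1), 2(k-1)). -/
/-- A sequence of positive integers is valleyless if no entry is strictly below some
earlier entry and some later entry. -/
def SeqValleyless {n : ℕ} (s : Fin n → ℕ) : Prop :=
  ∀ i j k : Fin n, i < j → j < k → min (s i) (s k) ≤ s j

/-!
Write `k = K + 1`. A sequence `s` with values in `[1, K + 1]` is determined by its superlevel sets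
`{i | v + 2 ≤ s i}`, `v < K`. It is valleyless exactly when these are intervals `[a v, b v]`, and
they are nested and nonempty when `s` attains `K + 1`. Thus valleyless sequences correspond to the
weakly increasing sequences `a 0 ≤ ⋯ ≤ a (K-1) ≤ b (K-1) ≤ ⋯ ≤ b 0` of `2K` positions in `Fin n`,
and by stars and bars there are `C(n - 1 + 2K, 2K)` of those.
-/

open Finset

lemma Fin.apply_add_sub_le_of_strictMono {k : ℕ} {f : Fin k → ℕ} (hf : StrictMono f)
    {i j : Fin k} (hij : i ≤ j) : f i + (j - i) ≤ f j := by
  have hcard := card_le_card_of_injOn f (s := Icc i j) (t := Icc (f i) (f j))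
    (fun x hx => by
      simp only [coe_Icc, Set.mem_Icc] at hx ⊢
      exact ⟨hf.monotone hx.1, hf.monotone hx.2⟩)
    hf.injective.injOn
  rw [Fin.card_Icc, Nat.card_Icc] at hcard
  have := hf.monotone hij
  omega

lemma Fin.val_le_apply_le_add_of_strictMono {k N : ℕ} {f : Fin k → Fin (N + k)}
    (hf : StrictMono f) (i : Fin k) : (i : ℕ) ≤ f i ∧ (f i : ℕ) ≤ N + i := by
  have hf' : StrictMono fun i => (f i : ℕ) := Fin.val_strictMono.comp hf
  have h₀ := Fin.apply_add_sub_le_of_strictMono hf' (i := ⟨0, i.pos⟩) (j := i)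
    (Fin.le_def.2 (Nat.zero_le _))
  have h₁ := Fin.apply_add_sub_le_of_strictMono hf' (i := i)
    (j := ⟨k - 1, Nat.sub_one_lt_of_lt i.isLt⟩)
    (Fin.le_def.2 (Nat.le_sub_one_of_lt i.isLt))
  have := (f ⟨k - 1, by omega⟩).isLt
  simp only at h₀ h₁
  omega

/-- Stars and bars: `c ↦ (i ↦ c i + i)` turns weakly increasing sequences into strictly
increasing ones. -/
def Fin.monotoneEquivOrderEmbedding (k N : ℕ) :
    {c : Fin k → Fin (N + 1) // Monotone c} ≃ (Fin k ↪o Fin (N + k)) where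
  toFun c := OrderEmbedding.ofStrictMono (fun i => ⟨c.1 i + i, by omega⟩) fun i j hij => by
    have := c.2 hij.le
    simp only [Fin.le_def, Fin.lt_def] at this hij ⊢
    omega
  invFun f :=
    ⟨fun i => ⟨f i - i, by have := Fin.val_le_apply_le_add_of_strictMono f.strictMono i; omega⟩,
      fun i j hij => by
        have := Fin.apply_add_sub_le_of_strictMono (Fin.val_strictMono.comp f.strictMono) hij
        simp only [Fin.le_def, Function.comp_apply] at this hij ⊢
        omega⟩
  left_inv c := by ext i; exact Nat.add_sub_cancel ..
  right_inv f := by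
    ext i
    have := Fin.val_le_apply_le_add_of_strictMono f.strictMono i
    change (f i : ℕ) - i + i = f i
    omega

theorem Fin.card_monotone (k N : ℕ) :
    Nat.card {c : Fin k → Fin (N + 1) // Monotone c} = (N + k).choose k := by
  rw [Nat.card_congr ((Fin.monotoneEquivOrderEmbedding k N).trans
    Set.powersetCard.ofFinEmbEquiv), Set.powersetCard.card, Nat.card_eq_fintype_card,
    Fintype.card_fin]

lemma Fin.monotone_append {α : Type*} [Preorder α] {m n : ℕ} {u : Fin m → α} {v : Fin n → α}
    (hu : Monotone u) (hv : Monotone v) (huv : ∀ i j, u i ≤ v j) :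
    Monotone (Fin.append u v) := by
  intro x y hxy
  induction x using Fin.addCases with
  | left i =>
    induction y using Fin.addCases with
    | left j => simpa using hu (show i ≤ j from hxy)
    | right j => simpa using huv i j
  | right i =>
    induction y using Fin.addCases with
    | left j => exact absurd hxy (by simp [Fin.le_def]; omega)
    | right j => simpa using hv ((Fin.natAdd_le_natAdd_iff m).1 hxy)

section Superlevel

variable {n : ℕ}

def superlevel (s : Fin n → ℕ) (t : ℕ) : Finset (Fin n) := {i | t ≤ s i}

@[simp]
lemma mem_superlevel {s : Fin n → ℕ} {t : ℕ} {i : Fin n} : i ∈ superlevel s t ↔ t ≤ s i := by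
  simp [superlevel]

lemma superlevel_antitone (s : Fin n → ℕ) : Antitone (superlevel s) :=
  fun _ _ htu _ hi => mem_superlevel.2 (htu.trans (mem_superlevel.1 hi))

lemma superlevel_nonempty {K : ℕ} {s : Fin n → ℕ} (hs : ∃ i, s i = K + 1) (v : Fin K) :
    (superlevel s (v + 2)).Nonempty := by
  obtain ⟨i, hi⟩ := hs
  exact ⟨i, mem_superlevel.2 (by omega)⟩

lemma SeqValleyless.le_iff_min'_le_and_le_max' {s : Fin n → ℕ} (hs : SeqValleyless s)
    {t : ℕ} (h : (superlevel s t).Nonempty) (i : Fin n) :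
    t ≤ s i ↔ (superlevel s t).min' h ≤ i ∧ i ≤ (superlevel s t).max' h := by
  refine ⟨fun hi => ⟨min'_le _ _ (by simpa), le_max' _ _ (by simpa)⟩, ?_⟩
  rintro ⟨hai, hib⟩
  have ha := mem_superlevel.1 (min'_mem _ h)
  have hb := mem_superlevel.1 (max'_mem _ h)
  rcases hai.eq_or_lt with rfl | hai
  · exact ha
  rcases hib.eq_or_lt with rfl | hib
  · exact hb
  exact (le_min ha hb).trans (hs _ _ _ hai hib)

end Superlevel

lemma eq_of_forall_add_two_le_iff {K x y : ℕ} (hx : 1 ≤ x) (hx' : x ≤ K + 1) (hy : 1 ≤ y)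
    (hy' : y ≤ K + 1)
    (h : ∀ v : Fin K, (v : ℕ) + 2 ≤ x ↔ (v : ℕ) + 2 ≤ y) : x = y := by
  by_contra hne
  rcases Nat.lt_or_gt_of_ne hne with hxy | hxy
  · have := h ⟨y - 2, by omega⟩
    simp only at this
    omega
  · have := h ⟨x - 2, by omega⟩
    simp only at this
    omega

/-- The nested intervals `[left 0, right 0] ⊇ [left 1, right 1] ⊇ ⋯`. -/
@[ext]
structure NestedIntervals (K : ℕ) (α : Type*) [Preorder α] where
  left : Fin K → α
  right : Fin K → α
  monotone_left : Monotone left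
  antitone_right : Antitone right
  left_le_right : ∀ v w, left v ≤ right w

namespace NestedIntervals

/-- Reading the endpoints `left 0 ≤ ⋯ ≤ left (K-1) ≤ right (K-1) ≤ ⋯ ≤ right 0` in order. -/
def monotoneEquiv (K : ℕ) (α : Type*) [Preorder α] :
    {c : Fin (K + K) → α // Monotone c} ≃ NestedIntervals K α where
  toFun c :=
    { left := c.1 ∘ Fin.castAdd K
      right := c.1 ∘ Fin.natAdd K ∘ Fin.rev
      monotone_left := c.2.comp (Fin.strictMono_castAdd K).monotone
      antitone_right := (c.2.comp (Fin.strictMono_natAdd K).monotone).comp_antitone Fin.rev_anti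
      left_le_right := fun v w => c.2 (by simp [Fin.le_def]; omega) }
  invFun p := ⟨Fin.append p.left (p.right ∘ Fin.rev),
    Fin.monotone_append p.monotone_left (Antitone.comp p.antitone_right Fin.rev_anti)
      fun v w => p.left_le_right v _⟩
  left_inv c := by
    ext1
    simpa only [Function.comp_def, Fin.rev_rev] using Fin.append_castAdd_natAdd
  right_inv p := by
    ext v <;> simp only [Function.comp_apply, Fin.append_left, Fin.append_right, Fin.rev_rev]

section LinearOrder

variable {K : ℕ} {α : Type*} [LinearOrder α]

lemma exists_forall_mem [Nonempty α] (p : NestedIntervals K α) :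
    ∃ i, ∀ v, p.left v ≤ i ∧ i ≤ p.right v := by
  rcases K with _ | K
  · exact ⟨Classical.arbitrary α, fun v => v.elim0⟩
  · exact ⟨p.left (Fin.last K), fun v => ⟨p.monotone_left (Fin.le_last v), p.left_le_right _ _⟩⟩

def seq (p : NestedIntervals K α) (i : α) : ℕ :=
  #{v | p.left v ≤ i ∧ i ≤ p.right v} + 1

lemma add_two_le_seq_iff (p : NestedIntervals K α) (v : Fin K) (i : α) :
    (v : ℕ) + 2 ≤ p.seq i ↔ p.left v ≤ i ∧ i ≤ p.right v := by
  rw [seq, ← Fin.lt_card_filter_univ_iff_apply_of_imp (fun v => p.left v ≤ i ∧ i ≤ p.right v)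
    fun w v hvw h => ⟨(p.monotone_left hvw).trans h.1, h.2.trans (p.antitone_right hvw)⟩]
  omega

lemma seq_le (p : NestedIntervals K α) (i : α) : p.seq i ≤ K + 1 := by
  simpa [seq] using card_le_univ (α := Fin K) _

lemma exists_seq_eq [Nonempty α] (p : NestedIntervals K α) : ∃ i, p.seq i = K + 1 := by
  obtain ⟨i, hi⟩ := p.exists_forall_mem
  exact ⟨i, by simp [seq, hi]⟩

end LinearOrder

variable {K n : ℕ}

lemma seqValleyless_seq (p : NestedIntervals K (Fin n)) : SeqValleyless p.seq := by
  intro i j k hij hjk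
  by_contra! h
  rw [lt_min_iff] at h
  have hj₀ : 1 ≤ p.seq j := Nat.le_add_left _ _
  have hj : p.seq j - 1 < K := by have := p.seq_le i; omega
  have hi := (p.add_two_le_seq_iff ⟨_, hj⟩ i).1 (by simp only; omega)
  have hk := (p.add_two_le_seq_iff ⟨_, hj⟩ k).1 (by simp only; omega)
  have := (p.add_two_le_seq_iff ⟨_, hj⟩ j).2 ⟨hi.1.trans hij.le, hjk.le.trans hk.2⟩
  simp only at this
  omega

def ofSeq (s : Fin n → ℕ) (hs : ∃ i, s i = K + 1) : NestedIntervals K (Fin n) where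
  left v := (superlevel s (v + 2)).min' (superlevel_nonempty hs v)
  right v := (superlevel s (v + 2)).max' (superlevel_nonempty hs v)
  monotone_left v w hvw :=
    min'_subset _ (superlevel_antitone s (Nat.add_le_add_right (Fin.le_def.1 hvw) 2))
  antitone_right v w hvw :=
    max'_subset _ (superlevel_antitone s (Nat.add_le_add_right (Fin.le_def.1 hvw) 2))
  left_le_right v w := by
    obtain ⟨i, hi⟩ := hs
    exact (min'_le _ i (mem_superlevel.2 (by omega))).trans
      (le_max' _ i (mem_superlevel.2 (by omega)))

lemma seq_ofSeq {s : Fin n → ℕ} (hpos : ∀ i, 0 < s i) (hs : SeqValleyless s)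
    (hle : ∀ i, s i ≤ K + 1) (hmax : ∃ i, s i = K + 1) : (ofSeq s hmax).seq = s := by
  funext i
  refine eq_of_forall_add_two_le_iff (Nat.le_add_left _ _) (seq_le _ _) (hpos i) (hle i)
    fun v => ?_
  rw [add_two_le_seq_iff, hs.le_iff_min'_le_and_le_max' (superlevel_nonempty hmax v)]
  rfl

lemma ofSeq_seq [NeZero n] (p : NestedIntervals K (Fin n)) :
    ofSeq p.seq p.exists_seq_eq = p := by
  have hne := superlevel_nonempty p.exists_seq_eq
  ext v : 2
  · refine le_antisymm (min'_le _ _ ?_) (le_min' _ (hne v) _ fun i hi => ?_)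
    · exact mem_superlevel.2 ((p.add_two_le_seq_iff v _).2 ⟨le_rfl, p.left_le_right v v⟩)
    · exact ((p.add_two_le_seq_iff v i).1 (mem_superlevel.1 hi)).1
  · refine le_antisymm (max'_le _ (hne v) _ fun i hi => ?_) (le_max' _ _ ?_)
    · exact ((p.add_two_le_seq_iff v i).1 (mem_superlevel.1 hi)).2
    · exact mem_superlevel.2 ((p.add_two_le_seq_iff v _).2 ⟨p.left_le_right v v, le_rfl⟩)

def valleylessEquiv (K n : ℕ) [NeZero n] :
    NestedIntervals K (Fin n) ≃
      {s : Fin n → ℕ // (∀ i, 0 < s i) ∧ SeqValleyless s ∧ (∀ i, s i ≤ K + 1) ∧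
        ∃ i, s i = K + 1} where
  toFun p := ⟨p.seq, fun _ => Nat.succ_pos _, p.seqValleyless_seq, p.seq_le, p.exists_seq_eq⟩
  invFun s := ofSeq s.1 s.2.2.2.2
  left_inv := ofSeq_seq
  right_inv s := Subtype.ext (seq_ofSeq s.2.1 s.2.2.1 s.2.2.2.1 s.2.2.2.2)

end NestedIntervals

/-- The number of valleyless sequences of length `n` of positive integers with maximum
entry exactly `k` is `C(n - 1 + 2(k-1), 2(k-1))`. -/
theorem valleyless_count (n k : ℕ) (hn : 1 ≤ n) (hk : 1 ≤ k) :
    Nat.card {s : Fin n → ℕ // (∀ i, 0 < s i) ∧ SeqValleyless s ∧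
        (∀ i, s i ≤ k) ∧ (∃ i, s i = k)} =
      Nat.choose (n - 1 + 2 * (k - 1)) (2 * (k - 1)) := by
  obtain ⟨N, rfl⟩ : ∃ N, n = N + 1 := ⟨n - 1, by omega⟩
  obtain ⟨K, rfl⟩ : ∃ K, k = K + 1 := ⟨k - 1, by omega⟩
  rw [← Nat.card_congr (NestedIntervals.valleylessEquiv K (N + 1)),
    ← Nat.card_congr (NestedIntervals.monotoneEquiv K (Fin (N + 1))), Fin.card_monotone]
  simp [two_mul]
end

section
/- Let V_{n,k} denote the number of valleyless sequences of length n with maximum entry exactly k, and let V_{n,k}' denote the number of valleyless sequences of length n with all entries in {1,...,k} (maximum at most k). Then V_{n,k}' = sum_{j=1}^{k} C(n - 1 + 2(j-1), 2(j-1)). -/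
open Finset


lemma strict_aux {m N : ℕ} {h : Fin m → Fin N} (hh : StrictMono h) :
    ∀ (d : ℕ) (i j : Fin m), (i : ℕ) + d = (j : ℕ) → (h i : ℕ) + d ≤ (h j : ℕ) := by
  intro d
  induction d with
  | zero =>
    intro i j hij
    have : i = j := Fin.ext (by omega)
    simp [this]
  | succ d ih =>
    intro i j hij
    have hj1 : (j : ℕ) - 1 < m := by have := j.isLt; omega
    have h1 : (h i : ℕ) + d ≤ (h ⟨(j : ℕ) - 1, hj1⟩ : ℕ) := ih i _ (by simp; omega)
    have h2 : h ⟨(j : ℕ) - 1, hj1⟩ < h j := hh (by rw [Fin.lt_def]; simp; omega)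
    rw [Fin.lt_def] at h2
    omega

lemma card_monotone_maps (n m : ℕ) (hn : 1 ≤ n) :
    Nat.card {g : Fin m → Fin n // Monotone g} = (n + m - 1).choose m := by
  set N := n + m - 1 with hN
  have e1 : {g : Fin m → Fin n // Monotone g} ≃ {h : Fin m → Fin N // StrictMono h} :=
    { toFun := fun x => ⟨fun i => ⟨(x.1 i : ℕ) + (i : ℕ), by
          have h1 := (x.1 i).isLt; have h2 := i.isLt; omega⟩, by
        intro a b hab
        have h3 : (x.1 a : ℕ) ≤ (x.1 b : ℕ) := x.2 (le_of_lt hab)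
        rw [Fin.lt_def] at hab ⊢
        simp only []
        omega⟩
      invFun := fun x => ⟨fun i => ⟨(x.1 i : ℕ) - (i : ℕ), by
          have hlast : m - 1 < m := by have := i.isLt; omega
          have h1 := strict_aux x.2 ((m - 1) - (i : ℕ)) i ⟨m - 1, hlast⟩
            (by simp; have := i.isLt; omega)
          have h2 := (x.1 ⟨m - 1, hlast⟩).isLt
          have h3 := i.isLt
          omega⟩, by
        intro a b hab
        rw [Fin.le_def] at hab ⊢
        simp only []
        have h1 := strict_aux x.2 ((b : ℕ) - (a : ℕ)) a b (by omega)
        have h2 := strict_aux x.2 (a : ℕ) ⟨0, by have := a.isLt; omega⟩ a (by simp)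
        have h3 := strict_aux x.2 (b : ℕ) ⟨0, by have := a.isLt; omega⟩ b (by simp)
        omega⟩
      left_inv := fun x => Subtype.ext (funext fun i => Fin.ext (by simp))
      right_inv := fun x => Subtype.ext (funext fun i => Fin.ext (by
        simp only []
        have h2 := strict_aux x.2 (i : ℕ) ⟨0, by have := i.isLt; omega⟩ i (by simp)
        omega)) }
  have e2 : {h : Fin m → Fin N // StrictMono h} ≃ {s : Finset (Fin N) // s.card = m} :=
    { toFun := fun x => ⟨univ.map ⟨x.1, x.2.injective⟩, by simp⟩
      invFun := fun s => ⟨⇑(s.1.orderEmbOfFin s.2), (s.1.orderEmbOfFin s.2).strictMono⟩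
      left_inv := fun x => Subtype.ext
        ((Finset.orderEmbOfFin_unique _ (fun i => by simp) x.2).symm)
      right_inv := fun s => Subtype.ext (Finset.eq_of_subset_of_card_le (fun i hi => by
          simp only [Finset.mem_map] at hi
          obtain ⟨a, -, rfl⟩ := hi
          exact Finset.orderEmbOfFin_mem s.1 s.2 a) (by simp [s.2])) }
  rw [Nat.card_congr (e1.trans e2), Nat.card_eq_fintype_card, Fintype.card_finset_len,
    Fintype.card_fin]


/-- extend a `Fin (2*k) → Fin n` function to `ℕ → ℕ` with junk value `n`. -/
def gvAux (n k : ℕ) (g : Fin (2 * k) → Fin n) : ℕ → ℕ :=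
  fun p => if h : p < 2 * k then (g ⟨p, h⟩ : ℕ) else n

/-- the sequence encoded by boundary data `G`. -/
def seqOfAux (n k : ℕ) (G : ℕ → ℕ) : Fin n → ℕ := fun i =>
  1 + ((Finset.Icc 1 k).filter fun t => G (t - 1) ≤ (i : ℕ) ∧ (i : ℕ) ≤ G (2 * k - t)).card

lemma gvAux_mono {n k : ℕ} {g : Fin (2 * k) → Fin n} (hg : Monotone g)
    {p q : ℕ} (hpq : p ≤ q) (hq : q < 2 * k) : gvAux n k g p ≤ gvAux n k g q := by
  unfold gvAux
  rw [dif_pos hq, dif_pos (lt_of_le_of_lt hpq hq)]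
  exact hg (show (⟨p, _⟩ : Fin (2 * k)) ≤ ⟨q, hq⟩ from hpq)

lemma seqOf_ge_iff {n k : ℕ} (g : Fin (2 * k) → Fin n) (hg : Monotone g)
    {t : ℕ} (ht1 : 1 ≤ t) (htk : t ≤ k) (i : Fin n) :
    t + 1 ≤ seqOfAux n k (gvAux n k g) i ↔
      (gvAux n k g (t - 1) ≤ (i : ℕ) ∧ (i : ℕ) ≤ gvAux n k g (2 * k - t)) := by
  set G := gvAux n k g with hG
  constructor
  · intro hle
    by_contra hA
    have hsub : ((Finset.Icc 1 k).filter fun t' => G (t' - 1) ≤ (i : ℕ) ∧ (i : ℕ) ≤ G (2 * k - t'))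
        ⊆ Finset.Icc 1 (t - 1) := by
      intro t' ht'
      simp only [mem_filter, mem_Icc] at ht' ⊢
      obtain ⟨⟨h1, h2⟩, h3, h4⟩ := ht'
      constructor
      · exact h1
      · by_contra hcon
        have htt' : t ≤ t' := by omega
        exact hA ⟨le_trans (gvAux_mono hg (by omega) (by omega)) h3,
          le_trans h4 (gvAux_mono hg (by omega) (by omega))⟩
    have hcard := Finset.card_le_card hsub
    rw [Nat.card_Icc] at hcard
    unfold seqOfAux at hle
    omega
  · intro hA
    have hsub : Finset.Icc 1 t ⊆
        ((Finset.Icc 1 k).filter fun t' => G (t' - 1) ≤ (i : ℕ) ∧ (i : ℕ) ≤ G (2 * k - t')) := by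
      intro t' ht'
      simp only [mem_Icc] at ht'
      simp only [mem_filter, mem_Icc]
      refine ⟨⟨ht'.1, le_trans ht'.2 htk⟩,
        le_trans (gvAux_mono hg (by omega) (by omega)) hA.1,
        le_trans hA.2 (gvAux_mono hg (by omega) (by omega))⟩
    have hcard := Finset.card_le_card hsub
    rw [Nat.card_Icc] at hcard
    unfold seqOfAux
    omega

lemma seqOf_props {n k : ℕ} (hn : 1 ≤ n) (g : Fin (2 * k) → Fin n) (hg : Monotone g) :
    (∀ i, 0 < seqOfAux n k (gvAux n k g) i) ∧ SeqValleyless (seqOfAux n k (gvAux n k g)) ∧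
      (∀ i, seqOfAux n k (gvAux n k g) i ≤ k + 1) ∧
      (∃ i, seqOfAux n k (gvAux n k g) i = k + 1) := by
  set s := seqOfAux n k (gvAux n k g) with hs
  have hub : ∀ i, s i ≤ k + 1 := by
    intro i
    have := Finset.card_le_card (Finset.filter_subset
      (fun t => gvAux n k g (t - 1) ≤ (i : ℕ) ∧ (i : ℕ) ≤ gvAux n k g (2 * k - t))
      (Finset.Icc 1 k))
    rw [Nat.card_Icc] at this
    show 1 + _ ≤ k + 1
    omega
  refine ⟨fun i => by show 0 < 1 + _; omega, ?_, hub, ?_⟩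
  · intro i j l hij hjl
    rcases Nat.lt_or_ge (min (s i) (s l)) 2 with hm | hm
    · have : 1 ≤ s j := by show 1 ≤ 1 + _; omega
      omega
    · set t := min (s i) (s l) - 1 with ht
      have ht1 : 1 ≤ t := by omega
      have htk : t ≤ k := by have := hub i; omega
      have hi : t + 1 ≤ s i := by omega
      have hl : t + 1 ≤ s l := by omega
      rw [hs, seqOf_ge_iff g hg ht1 htk] at hi hl
      have hj : t + 1 ≤ s j := by
        rw [hs, seqOf_ge_iff g hg ht1 htk]
        rw [Fin.lt_def] at hij hjl
        exact ⟨by omega, by omega⟩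
      omega
  · rcases Nat.eq_zero_or_pos k with rfl | hk
    · refine ⟨⟨0, hn⟩, ?_⟩
      show 1 + Finset.card _ = 0 + 1
      rw [show Finset.Icc 1 0 = (∅ : Finset ℕ) by simp]
      simp
    · have hkk : k - 1 < 2 * k := by omega
      refine ⟨g ⟨k - 1, hkk⟩, le_antisymm (hub _) ?_⟩
      rw [seqOf_ge_iff g hg hk le_rfl]
      constructor
      · unfold gvAux
        rw [dif_pos hkk]
      · have h2 : 2 * k - k < 2 * k := by omega
        unfold gvAux
        rw [dif_pos h2]
        have : (⟨k - 1, hkk⟩ : Fin (2 * k)) ≤ ⟨2 * k - k, h2⟩ := by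
          rw [Fin.le_def]; simp; omega
        exact hg this

def FmAux (n : ℕ) (s : Fin n → ℕ) (i₀ : Fin n) (m : ℕ) : Finset (Fin n) :=
  insert i₀ (Finset.univ.filter (fun i => m ≤ s i))

lemma FmAux_nonempty (n : ℕ) (s : Fin n → ℕ) (i₀ : Fin n) (m : ℕ) : (FmAux n s i₀ m).Nonempty :=
  ⟨i₀, Finset.mem_insert_self _ _⟩

lemma mem_FmAux {n k : ℕ} {s : Fin n → ℕ} {i₀ : Fin n} (hi₀ : s i₀ = k + 1)
    {m : ℕ} (hm : m ≤ k + 1) (x : Fin n) : x ∈ FmAux n s i₀ m ↔ m ≤ s x := by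
  unfold FmAux
  rw [Finset.mem_insert, Finset.mem_filter]
  constructor
  · rintro (rfl | ⟨-, h⟩)
    · omega
    · exact h
  · intro h
    exact Or.inr ⟨Finset.mem_univ x, h⟩

def gOfAux (n k : ℕ) (s : Fin n → ℕ) (i₀ : Fin n) : Fin (2 * k) → Fin n := fun p =>
  if (p : ℕ) < k then (FmAux n s i₀ ((p : ℕ) + 2)).min' (FmAux_nonempty n s i₀ _)
  else (FmAux n s i₀ (2 * k - (p : ℕ) + 1)).max' (FmAux_nonempty n s i₀ _)

lemma FmAux_subset {n k : ℕ} {s : Fin n → ℕ} {i₀ : Fin n} (hi₀ : s i₀ = k + 1)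
    {m m' : ℕ} (hmm : m ≤ m') (hm' : m' ≤ k + 1) :
    FmAux n s i₀ m' ⊆ FmAux n s i₀ m := by
  intro x hx
  rw [mem_FmAux hi₀ hm'] at hx
  rw [mem_FmAux hi₀ (by omega)]
  omega

lemma gOfAux_mono {n k : ℕ} {s : Fin n → ℕ} {i₀ : Fin n} (hi₀ : s i₀ = k + 1) :
    Monotone (gOfAux n k s i₀) := by
  intro p q hpq
  rw [Fin.le_def] at hpq
  have hplt := p.isLt
  have hqlt := q.isLt
  unfold gOfAux
  rcases Nat.lt_or_ge (p : ℕ) k with hp | hp <;> rcases Nat.lt_or_ge (q : ℕ) k with hq | hq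
  · rw [if_pos hp, if_pos hq]
    exact Finset.min'_le _ _
      (FmAux_subset hi₀ (by omega) (by omega) (Finset.min'_mem _ _))
  · rw [if_pos hp, if_neg (by omega)]
    exact le_trans (Finset.min'_le _ _ (Finset.mem_insert_self _ _))
      (Finset.le_max' _ _ (Finset.mem_insert_self _ _))
  · omega
  · rw [if_neg (by omega), if_neg (by omega)]
    exact Finset.le_max' _ _
      (FmAux_subset hi₀ (by omega) (by omega) (Finset.max'_mem _ _))

lemma interval_FmAux {n k : ℕ} {s : Fin n → ℕ} {i₀ : Fin n} (hi₀ : s i₀ = k + 1)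
    (hvl : SeqValleyless s) {m : ℕ} (hm : m ≤ k + 1) (i : Fin n) :
    m ≤ s i ↔ ((FmAux n s i₀ m).min' (FmAux_nonempty n s i₀ m) ≤ i ∧
      i ≤ (FmAux n s i₀ m).max' (FmAux_nonempty n s i₀ m)) := by
  constructor
  · intro h
    have hiF : i ∈ FmAux n s i₀ m := (mem_FmAux hi₀ hm i).2 h
    exact ⟨Finset.min'_le _ _ hiF, Finset.le_max' _ _ hiF⟩
  · rintro ⟨h1, h2⟩
    have hmin : m ≤ s ((FmAux n s i₀ m).min' (FmAux_nonempty n s i₀ m)) :=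
      (mem_FmAux hi₀ hm _).1 (Finset.min'_mem _ _)
    have hmax : m ≤ s ((FmAux n s i₀ m).max' (FmAux_nonempty n s i₀ m)) :=
      (mem_FmAux hi₀ hm _).1 (Finset.max'_mem _ _)
    rcases eq_or_lt_of_le h1 with heq | hlt
    · exact heq ▸ hmin
    · rcases eq_or_lt_of_le h2 with heq2 | hlt2
      · rw [heq2]; exact hmax
      · have := hvl _ i _ hlt hlt2
        omega

lemma seqOf_gOfAux {n k : ℕ} {s : Fin n → ℕ} {i₀ : Fin n} (hi₀ : s i₀ = k + 1)
    (hpos : ∀ i, 0 < s i) (hvl : SeqValleyless s) (hub : ∀ i, s i ≤ k + 1) :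
    seqOfAux n k (gvAux n k (gOfAux n k s i₀)) = s := by
  funext i
  unfold seqOfAux
  have hcond : ∀ t ∈ Finset.Icc 1 k,
      ((gvAux n k (gOfAux n k s i₀) (t - 1) ≤ (i : ℕ) ∧
        (i : ℕ) ≤ gvAux n k (gOfAux n k s i₀) (2 * k - t)) ↔ (t + 1 ≤ s i)) := by
    intro t ht
    rw [Finset.mem_Icc] at ht
    have h1 : t - 1 < 2 * k := by omega
    have h2 : 2 * k - t < 2 * k := by omega
    have e1 : gvAux n k (gOfAux n k s i₀) (t - 1) =
        ((FmAux n s i₀ (t + 1)).min' (FmAux_nonempty n s i₀ _) : ℕ) := by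
      unfold gvAux gOfAux
      rw [dif_pos h1]
      rw [if_pos (show ((⟨t - 1, h1⟩ : Fin (2 * k)) : ℕ) < k from by simp only []; omega)]
      simp only [show t - 1 + 2 = t + 1 from by omega]
    have e2 : gvAux n k (gOfAux n k s i₀) (2 * k - t) =
        ((FmAux n s i₀ (t + 1)).max' (FmAux_nonempty n s i₀ _) : ℕ) := by
      unfold gvAux gOfAux
      rw [dif_pos h2]
      rw [if_neg (show ¬ ((⟨2 * k - t, h2⟩ : Fin (2 * k)) : ℕ) < k from by simp only []; omega)]
      simp only [show 2 * k - (2 * k - t) + 1 = t + 1 from by omega]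
    rw [e1, e2, interval_FmAux hi₀ hvl (show t + 1 ≤ k + 1 by omega) i]
    rw [Fin.le_def, Fin.le_def]
  rw [Finset.filter_congr hcond]
  have hfin : (Finset.Icc 1 k).filter (fun t => t + 1 ≤ s i) = Finset.Icc 1 (s i - 1) := by
    ext t
    simp only [Finset.mem_filter, Finset.mem_Icc]
    have := hub i
    have := hpos i
    omega
  rw [hfin, Nat.card_Icc]
  have := hpos i
  omega

lemma card_exact (n k : ℕ) (hn : 1 ≤ n) :
    Nat.card {s : Fin n → ℕ // (∀ i, 0 < s i) ∧ SeqValleyless s ∧ (∀ i, s i ≤ k + 1) ∧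
      (∃ i, s i = k + 1)} = (n + 2 * k - 1).choose (2 * k) := by
  rw [← card_monotone_maps n (2 * k) hn]
  refine (Nat.card_eq_of_bijective
    (fun x => ⟨seqOfAux n k (gvAux n k x.1), seqOf_props hn x.1 x.2⟩) ⟨?_, ?_⟩).symm
  · -- injective
    have key : ∀ (g g' : Fin (2 * k) → Fin n), Monotone g → Monotone g' →
        seqOfAux n k (gvAux n k g) = seqOfAux n k (gvAux n k g') →
        ∀ t, 1 ≤ t → t ≤ k →
          gvAux n k g' (t - 1) ≤ gvAux n k g (t - 1) ∧
          gvAux n k g (2 * k - t) ≤ gvAux n k g' (2 * k - t) := by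
      intro g g' hg hg' hfun t ht1 htk
      have ht1lt : t - 1 < 2 * k := by omega
      have ht2lt : 2 * k - t < 2 * k := by omega
      have e1 : gvAux n k g (t - 1) = (g ⟨t - 1, ht1lt⟩ : ℕ) := by
        unfold gvAux; rw [dif_pos ht1lt]
      have e2 : gvAux n k g (2 * k - t) = (g ⟨2 * k - t, ht2lt⟩ : ℕ) := by
        unfold gvAux; rw [dif_pos ht2lt]
      have hmid := gvAux_mono hg (show t - 1 ≤ 2 * k - t by omega) ht2lt
      constructor
      · have h1 : t + 1 ≤ seqOfAux n k (gvAux n k g) (g ⟨t - 1, ht1lt⟩) := by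
          rw [seqOf_ge_iff g hg ht1 htk]
          exact ⟨by omega, by omega⟩
        rw [hfun, seqOf_ge_iff g' hg' ht1 htk] at h1
        omega
      · have h1 : t + 1 ≤ seqOfAux n k (gvAux n k g) (g ⟨2 * k - t, ht2lt⟩) := by
          rw [seqOf_ge_iff g hg ht1 htk]
          exact ⟨by omega, by omega⟩
        rw [hfun, seqOf_ge_iff g' hg' ht1 htk] at h1
        omega
    rintro ⟨g, hg⟩ ⟨g', hg'⟩ h
    have hfun : seqOfAux n k (gvAux n k g) = seqOfAux n k (gvAux n k g') :=
      congrArg Subtype.val h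
    have k1 := key g g' hg hg' hfun
    have k2 := key g' g hg' hg hfun.symm
    apply Subtype.ext
    funext p
    apply Fin.ext
    have hplt := p.isLt
    rcases Nat.lt_or_ge (p : ℕ) k with hp | hp
    · have ht1 : 1 ≤ (p : ℕ) + 1 := by omega
      have htk : (p : ℕ) + 1 ≤ k := by omega
      have e1 := (k1 _ ht1 htk).1
      have e2 := (k2 _ ht1 htk).1
      have hv : gvAux n k g ((p : ℕ) + 1 - 1) = gvAux n k g' ((p : ℕ) + 1 - 1) := le_antisymm e2 e1
      unfold gvAux at hv
      rw [dif_pos (show (p : ℕ) + 1 - 1 < 2 * k by omega),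
        dif_pos (show (p : ℕ) + 1 - 1 < 2 * k by omega)] at hv
      simpa using hv
    · have ht1 : 1 ≤ 2 * k - (p : ℕ) := by omega
      have htk : 2 * k - (p : ℕ) ≤ k := by omega
      have e1 := (k1 _ ht1 htk).2
      have e2 := (k2 _ ht1 htk).2
      have hv : gvAux n k g (2 * k - (2 * k - (p : ℕ))) =
          gvAux n k g' (2 * k - (2 * k - (p : ℕ))) := le_antisymm e1 e2
      unfold gvAux at hv
      rw [dif_pos (show 2 * k - (2 * k - (p : ℕ)) < 2 * k by omega),
        dif_pos (show 2 * k - (2 * k - (p : ℕ)) < 2 * k by omega)] at hv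
      have hpe : 2 * k - (2 * k - (p : ℕ)) = (p : ℕ) := by omega
      simp only [hpe] at hv
      simpa using hv
  · -- surjective
    rintro ⟨s, hpos, hvl, hub, i₀, hi₀⟩
    exact ⟨⟨gOfAux n k s i₀, gOfAux_mono hi₀⟩,
      Subtype.ext (seqOf_gOfAux hi₀ hpos hvl hub)⟩

lemma finite_bdd (n c : ℕ) (P : (Fin n → ℕ) → Prop) (hP : ∀ s, P s → ∀ i, s i ≤ c) :
    Finite {s : Fin n → ℕ // P s} := by
  apply Finite.of_injective
    (fun x => (fun i => (⟨x.1 i, Nat.lt_succ_of_le (hP x.1 x.2 i)⟩ : Fin (c + 1)) : Fin n → Fin (c + 1)))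
  intro a b h
  apply Subtype.ext
  funext i
  simpa [Fin.ext_iff] using congrFun h i

/-- The number of valleyless sequences of length `n` with all entries in `{1,…,k}`
equals `∑_{j=1}^{k} C(n - 1 + 2(j-1), 2(j-1))`. -/
theorem valleyless_count_le (n k : ℕ) (hn : 1 ≤ n) :
    Nat.card {s : Fin n → ℕ // (∀ i, 0 < s i) ∧ SeqValleyless s ∧ (∀ i, s i ≤ k)} =
      ∑ j ∈ Finset.Icc 1 k, Nat.choose (n - 1 + 2 * (j - 1)) (2 * (j - 1)) := by
  induction k with
  | zero =>
    have : IsEmpty {s : Fin n → ℕ // (∀ i, 0 < s i) ∧ SeqValleyless s ∧ (∀ i, s i ≤ 0)} := by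
      constructor
      rintro ⟨s, hpos, -, hub⟩
      have h1 := hpos ⟨0, hn⟩
      have h2 := hub ⟨0, hn⟩
      omega
    rw [Nat.card_of_isEmpty]
    simp
  | succ k ih =>
    classical
    have hiff1 : ∀ s : Fin n → ℕ,
        (((∀ i, 0 < s i) ∧ SeqValleyless s ∧ (∀ i, s i ≤ k + 1)) ∧ ∃ i, s i = k + 1) ↔
          ((∀ i, 0 < s i) ∧ SeqValleyless s ∧ (∀ i, s i ≤ k + 1) ∧ ∃ i, s i = k + 1) := by
      intro s; tauto
    have hiff2 : ∀ s : Fin n → ℕ,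
        (((∀ i, 0 < s i) ∧ SeqValleyless s ∧ (∀ i, s i ≤ k + 1)) ∧ ¬ ∃ i, s i = k + 1) ↔
          ((∀ i, 0 < s i) ∧ SeqValleyless s ∧ (∀ i, s i ≤ k)) := by
      clear ih
      intro s
      constructor
      · rintro ⟨⟨hpos, hvl, hub⟩, hne⟩
        refine ⟨hpos, hvl, fun i => ?_⟩
        have h1 := hub i
        have h2 : s i ≠ k + 1 := fun hc => hne ⟨i, hc⟩
        omega
      · rintro ⟨hpos, hvl, hub⟩
        refine ⟨⟨hpos, hvl, fun i => by have := hub i; omega⟩, ?_⟩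
        rintro ⟨i, hi⟩
        have := hub i
        omega
    have eB := (Equiv.subtypeSubtypeEquivSubtypeInter
        (fun s : Fin n → ℕ => (∀ i, 0 < s i) ∧ SeqValleyless s ∧ (∀ i, s i ≤ k + 1))
        (fun s => ∃ i, s i = k + 1)).trans (Equiv.subtypeEquivRight hiff1)
    have eA := (Equiv.subtypeSubtypeEquivSubtypeInter
        (fun s : Fin n → ℕ => (∀ i, 0 < s i) ∧ SeqValleyless s ∧ (∀ i, s i ≤ k + 1))
        (fun s => ¬ ∃ i, s i = k + 1)).trans (Equiv.subtypeEquivRight hiff2)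
    have e : {s : Fin n → ℕ // (∀ i, 0 < s i) ∧ SeqValleyless s ∧ (∀ i, s i ≤ k + 1)} ≃
        {s : Fin n → ℕ // (∀ i, 0 < s i) ∧ SeqValleyless s ∧ (∀ i, s i ≤ k + 1) ∧
          (∃ i, s i = k + 1)} ⊕
        {s : Fin n → ℕ // (∀ i, 0 < s i) ∧ SeqValleyless s ∧ (∀ i, s i ≤ k)} :=
      (Equiv.sumCompl (fun x : {s : Fin n → ℕ // (∀ i, 0 < s i) ∧ SeqValleyless s ∧
        (∀ i, s i ≤ k + 1)} => ∃ i, x.1 i = k + 1)).symm.trans (Equiv.sumCongr eB eA)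
    have finB : Finite {s : Fin n → ℕ // (∀ i, 0 < s i) ∧ SeqValleyless s ∧
        (∀ i, s i ≤ k + 1) ∧ (∃ i, s i = k + 1)} :=
      finite_bdd n (k + 1) _ (fun s hs => hs.2.2.1)
    have finA : Finite {s : Fin n → ℕ // (∀ i, 0 < s i) ∧ SeqValleyless s ∧ (∀ i, s i ≤ k)} :=
      finite_bdd n k _ (fun s hs => hs.2.2)
    have harith : n + 2 * k - 1 = n - 1 + 2 * k := by clear ih; omega
    have hle1 : 1 ≤ k + 1 := Nat.succ_le_succ (Nat.zero_le k)
    rw [Nat.card_congr e, Nat.card_sum, card_exact n k hn, ih,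
      Finset.sum_Icc_succ_top hle1]
    rw [harith, show k + 1 - 1 = k from rfl, add_comm]
end

section
/- Let P(n,k) denote the number of permutations of {1,...,n} with exactly k valleys. Then P(n,k) = 2(k+1)·P(n-1,k) + (n-2k)·P(n-1,k-1) for n ≥ 2 and k ≥ 1. -/
/-- The word of the permutation, as a function `ℕ → ℕ` (junk value `0` outside range). -/
def permWord {n : ℕ} (π : Equiv.Perm (Fin n)) (j : ℕ) : ℕ :=
  if h : j < n then (π ⟨j, h⟩).val else 0

/-- The number of valleys of a permutation: interior positions `j` whose entry is strictly
smaller than both neighbours. -/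
def valleyCount {n : ℕ} (π : Equiv.Perm (Fin n)) : ℕ :=
  ((Finset.Ioo 0 (n - 1)).filter
    (fun j => permWord π j < permWord π (j - 1) ∧ permWord π j < permWord π (j + 1))).card

/-- `P n k`: the number of permutations of `{1,…,n}` with exactly `k` valleys. -/
noncomputable def P (n k : ℕ) : ℕ :=
  Nat.card {π : Equiv.Perm (Fin n) // valleyCount π = k}

/-!
Every permutation of `{1, …, n}` arises in exactly one way by inserting the letter `n` into one of
the `n` slots of a permutation of `{1, …, n-1}`. Encode a word by its descent string, bordered by
`-∞` on both sides: valleys are its `(true, false)` pairs and peaks its `(false, true)` pairs, and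
since the string starts with `false` and ends with `true` there is one more peak than valley.
Inserting the maximum at slot `p` replaces the `p`-th letter of the string by `false, true`; this
creates a new valley unless the slot is next to a peak. So of the `n` slots of a permutation with
`v` valleys, `2(v+1)` keep `v` valleys and the other `n - 2(v+1)` produce `v + 1`.
-/

namespace Valley

open Finset

theorem card_filter_eq_of_forall_eq_or_eq_add_one {ι : Type*} [Fintype ι] (f : ι → ℕ)
    (v : ℕ) (hf : ∀ i, f i = v ∨ f i = v + 1) (k : ℕ) :
    #{i | f i = k} =
      if k = v then #{i | f i = v}
      else if k = v + 1 then Fintype.card ι - #{i | f i = v} else 0 := by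
  split_ifs with hv hv1
  · rw [hv]
  · have hcompl : filter (fun i => f i = k) univ = filter (fun i => ¬ f i = v) univ := by
      refine filter_congr fun i _ => ?_
      rcases hf i with h | h <;> omega
    have hsplit := card_filter_add_card_filter_not (s := univ) (fun i => f i = v)
    rw [card_univ] at hsplit
    rw [hcompl]
    omega
  · refine card_eq_zero.mpr (filter_eq_empty_iff.mpr fun i _ => ?_)
    rcases hf i with h | h <;> omega

theorem card_filter_val_mem {N : ℕ} {s : Finset ℕ} (hs : s ⊆ range N) :
    #{p : Fin N | ↑p ∈ s} = #s := by
  rw [card_filter, Fin.sum_univ_eq_sum_range (fun i => if i ∈ s then 1 else 0), ← card_filter,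
    filter_mem_eq_inter, inter_eq_right.mpr hs]

def adjPairs (x y : Bool) (s : List Bool) : Finset ℕ :=
  {i ∈ range (s.length - 1) | s[i]? = some x ∧ s[i + 1]? = some y}

theorem succ_mem_adjPairs_cons {x y a : Bool} {s : List Bool} {i : ℕ} :
    i + 1 ∈ adjPairs x y (a :: s) ↔ i ∈ adjPairs x y s := by
  simp only [adjPairs, mem_filter, mem_range, List.length_cons, List.getElem?_cons_succ,
    Nat.add_sub_cancel, Nat.lt_sub_iff_add_lt]

theorem zero_mem_adjPairs_cons_cons {x y a b : Bool} {t : List Bool} :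
    0 ∈ adjPairs x y (a :: b :: t) ↔ a = x ∧ b = y := by
  simp [adjPairs]

theorem card_adjPairs_cons_cons (x y a b : Bool) (t : List Bool) :
    #(adjPairs x y (a :: b :: t)) =
      (if a = x ∧ b = y then 1 else 0) + #(adjPairs x y (b :: t)) := by
  simp only [adjPairs, card_filter, List.length_cons, Nat.add_sub_cancel]
  rw [sum_range_succ', add_comm]
  simp

theorem card_adjPairs_singleton (x y a : Bool) : #(adjPairs x y [a]) = 0 := by
  simp [adjPairs]

theorem card_adjPairs_cons_append_singleton (x y b : Bool) (l : List Bool) (a : Bool) :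
    #(adjPairs x y (a :: l ++ [b])) =
      #(adjPairs x y (a :: l)) + if l.getLastD a = x ∧ b = y then 1 else 0 := by
  induction l generalizing a with
  | nil => simp [card_adjPairs_cons_cons, card_adjPairs_singleton]
  | cons c t ih =>
    rw [List.cons_append, List.cons_append, card_adjPairs_cons_cons, ← List.cons_append, ih,
      card_adjPairs_cons_cons, List.getLastD_cons, add_assoc]

/-- `(false, true)` and `(true, false)` pairs alternate, so their numbers differ only through the
first and the last letter. -/
theorem card_adjPairs_false_true (a : Bool) (l : List Bool) :
    #(adjPairs false true (a :: l)) + (if a then 1 else 0) =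
      #(adjPairs true false (a :: l)) + if l.getLastD a then 1 else 0 := by
  induction l generalizing a with
  | nil => simp [card_adjPairs_singleton]
  | cons b t ih =>
    have := ih b
    rw [card_adjPairs_cons_cons, card_adjPairs_cons_cons, List.getLastD_cons]
    grind

theorem disjoint_adjPairs_cons_append (a : Bool) (l : List Bool) :
    Disjoint (adjPairs false true (a :: l)) (adjPairs false true (l ++ [true])) := by
  rw [Finset.disjoint_left]
  intro i h1 h2
  simp only [adjPairs, mem_filter, mem_range, List.length_append, List.length_cons,
    List.getElem?_cons_succ] at h1 h2
  rw [List.getElem?_append_left (by omega), h1.2.2] at h2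
  simp at h2

def insertPeak : List Bool → ℕ → List Bool
  | [], _ => []
  | _ :: t, 0 => false :: true :: t
  | b :: t, p + 1 => b :: insertPeak t p

/-- The slots of `l` next to a peak, i.e. a `(false, true)` pair, of `a :: l ++ [true]`. -/
def peakSlots (a : Bool) (l : List Bool) : Finset ℕ :=
  adjPairs false true (a :: l) ∪ adjPairs false true (l ++ [true])

theorem card_adjPairs_cons_insertPeak (a : Bool) (l : List Bool) (p : ℕ) (hp : p < l.length) :
    #(adjPairs true false (a :: insertPeak l p)) =
      #(adjPairs true false (a :: l)) + if p ∈ peakSlots a l then 0 else 1 := by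
  induction l generalizing a p with
  | nil => simp at hp
  | cons b t ih =>
    cases p with
    | zero =>
      cases t <;>
        simp only [insertPeak, peakSlots, card_adjPairs_cons_cons, card_adjPairs_singleton,
          List.cons_append, List.nil_append, mem_union, zero_mem_adjPairs_cons_cons] <;>
        grind
    | succ p =>
      rw [insertPeak, card_adjPairs_cons_cons, ih b p (by simpa using hp),
        card_adjPairs_cons_cons, add_assoc]
      simp only [peakSlots, List.cons_append, mem_union, succ_mem_adjPairs_cons]

theorem card_adjPairs_true_false_cons_false (s : List Bool) :
    #(adjPairs true false (false :: s)) = #(adjPairs true false s) := by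
  cases s with
  | nil => rfl
  | cons b t => simp [card_adjPairs_cons_cons]

theorem card_peakSlots (D : List Bool) (hD : D.getLastD false = true) :
    #(peakSlots false (false :: D)) = 2 * #(adjPairs true false (false :: D)) + 2 := by
  have alternation := card_adjPairs_false_true false D
  rw [peakSlots, card_union_of_disjoint (disjoint_adjPairs_cons_append _ _),
    card_adjPairs_cons_cons, card_adjPairs_cons_append_singleton, hD]
  simp only [hD] at alternation
  grind

theorem peakSlots_subset_range (a : Bool) (l : List Bool) : peakSlots a l ⊆ range l.length := by
  refine union_subset (filter_subset _ _) ?_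
  simp [adjPairs]

/-- For `prev = 0`, the descent string of the word bordered by `-∞` on both sides: entry `i` tells
whether letter `i` is below its left neighbour, and the final `true` stands for the right border. -/
def descents (prev : ℕ) : List ℕ → List Bool
  | [] => [true]
  | x :: t => decide (x < prev) :: descents x t

theorem length_descents (prev : ℕ) (l : List ℕ) : (descents prev l).length = l.length + 1 := by
  induction l generalizing prev <;> simp [descents, *]

theorem getLastD_descents (prev : ℕ) (l : List ℕ) (b : Bool) :
    (descents prev l).getLastD b = true := by
  induction l generalizing prev b with
  | nil => rfl
  | cons x t ih => rw [descents, List.getLastD_cons, ih]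

theorem getElem?_descents (prev : ℕ) (l : List ℕ) (i : ℕ) :
    (descents prev l)[i]? =
      if i < l.length then some (decide (l.getD i 0 < (prev :: l).getD i 0))
      else if i = l.length then some true else none := by
  induction l generalizing prev i with
  | nil => cases i <;> simp [descents]
  | cons x t ih =>
    cases i with
    | zero => simp [descents]
    | succ i => simp [descents, ih]

theorem descents_insertIdx {m prev : ℕ} {l : List ℕ} (hl : ∀ x ∈ l, x < m)
    (hprev : prev ≤ m) {p : ℕ} (hp : p ≤ l.length) :
    descents prev (l.insertIdx p m) = insertPeak (descents prev l) p := by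
  induction l generalizing prev p with
  | nil =>
    obtain rfl : p = 0 := by simpa using hp
    simp [descents, insertPeak, Nat.not_lt.mpr hprev]
  | cons x t ih =>
    cases p with
    | zero =>
      simp [descents, insertPeak, Nat.not_lt.mpr hprev, hl x (by simp)]
    | succ p =>
      simp only [List.insertIdx_succ_cons, descents, insertPeak]
      rw [ih (fun y hy => hl y (by simp [hy])) (hl x (by simp)).le (by simpa using hp)]

theorem card_adjPairs_descents (L : List ℕ) (hL : L.Nodup) :
    #(adjPairs true false (descents 0 L)) =
      #{j ∈ Ioo 0 (L.length - 1) |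
        L.getD j 0 < L.getD (j - 1) 0 ∧ L.getD j 0 < L.getD (j + 1) 0} := by
  congr 1
  ext j
  simp only [adjPairs, mem_filter, mem_range, mem_Ioo, length_descents, Nat.add_sub_cancel,
    getElem?_descents]
  rcases j with _ | j
  · simp +contextual
  simp only [List.getD_cons_succ, Nat.add_sub_cancel]
  by_cases hj : j + 2 < L.length
  · have hne : L.getD (j + 1) 0 ≠ L.getD (j + 1 + 1) 0 := by
      rw [List.getD_eq_getElem _ _ (by omega), List.getD_eq_getElem _ _ hj, Ne,
        hL.getElem_inj_iff]
      omega
    simp only [hj, (by omega : j + 1 < L.length), (by omega : j + 1 < L.length - 1),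
      Nat.succ_pos, if_true, Option.some.injEq, decide_eq_true_eq, decide_eq_false_iff_not,
      true_and]
    exact and_congr_right fun _ => by omega
  · have : ¬ j + 1 < L.length - 1 := by omega
    simp [hj, this]

def permList {n : ℕ} (π : Equiv.Perm (Fin n)) : List ℕ := List.ofFn fun i => (π i : ℕ)

theorem valleyCount_eq_card_adjPairs {n : ℕ} (π : Equiv.Perm (Fin n)) :
    valleyCount π = #(adjPairs true false (descents 0 (permList π))) := by
  have hword : permWord π = fun j => (permList π).getD j 0 := by
    funext j
    unfold permWord permList
    split_ifs with h <;> simp [h]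
  have hnodup : (permList π).Nodup := List.nodup_ofFn.mpr (Fin.val_injective.comp π.injective)
  rw [card_adjPairs_descents _ hnodup, valleyCount, hword]
  simp [permList]

section insertMax

variable {M : ℕ}

def insertMax (σ : Equiv.Perm (Fin M)) (p : Fin (M + 1)) : Equiv.Perm (Fin (M + 1)) :=
  (finSuccEquiv' p).trans ((Equiv.optionCongr σ).trans (finSuccEquiv' (Fin.last M)).symm)

theorem insertMax_apply_self (σ : Equiv.Perm (Fin M)) (p : Fin (M + 1)) :
    insertMax σ p p = Fin.last M := by
  simp [insertMax]

theorem insertMax_apply_succAbove (σ : Equiv.Perm (Fin M)) (p : Fin (M + 1)) (i : Fin M) :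
    insertMax σ p (p.succAbove i) = (σ i).castSucc := by
  simp [insertMax, ← Fin.succAbove_last]

theorem insertMax_injective :
    Function.Injective fun x : Equiv.Perm (Fin M) × Fin (M + 1) => insertMax x.1 x.2 := by
  rintro ⟨σ, p⟩ ⟨τ, q⟩ h
  simp only at h
  have hpq : p = q := by
    rw [← (insertMax σ p).symm_apply_eq.mpr (insertMax_apply_self σ p).symm, h,
      (insertMax τ q).symm_apply_eq.mpr (insertMax_apply_self τ q).symm]
  subst hpq
  refine Prod.ext (Equiv.ext fun i => Fin.castSucc_injective _ ?_) rfl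
  rw [← insertMax_apply_succAbove, h, insertMax_apply_succAbove]

theorem insertMax_bijective :
    Function.Bijective fun x : Equiv.Perm (Fin M) × Fin (M + 1) => insertMax x.1 x.2 := by
  refine (Fintype.bijective_iff_injective_and_card _).mpr ⟨insertMax_injective, ?_⟩
  simp [Fintype.card_perm, Nat.factorial_succ, mul_comm]

theorem permList_insertMax (σ : Equiv.Perm (Fin M)) (p : Fin (M + 1)) :
    permList (insertMax σ p) = (permList σ).insertIdx p M := by
  unfold permList
  refine List.ext_getElem (by simp [List.length_insertIdx_of_le_length, p.is_le])
    fun j hj _ => ?_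
  have hjM : j < M + 1 := by simpa using hj
  simp only [List.getElem_ofFn, List.getElem_insertIdx]
  split_ifs with hlt heq
  · have e : (⟨j, hjM⟩ : Fin (M + 1)) = p.succAbove ⟨j, by omega⟩ :=
      (Fin.succAbove_of_castSucc_lt p ⟨j, by omega⟩ (Fin.lt_def.mpr hlt)).symm
    rw [e, insertMax_apply_succAbove, Fin.val_castSucc]
  · rw [show (⟨j, hjM⟩ : Fin (M + 1)) = p from Fin.ext heq, insertMax_apply_self, Fin.val_last]
  · have e : (⟨j, hjM⟩ : Fin (M + 1)) = p.succAbove ⟨j - 1, by omega⟩ := by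
      rw [Fin.succAbove_of_le_castSucc _ _ (Fin.le_def.mpr (show (p : ℕ) ≤ j - 1 by omega))]
      exact Fin.ext (show j = j - 1 + 1 by omega)
    rw [e, insertMax_apply_succAbove, Fin.val_castSucc]

theorem valleyCount_insertMax (σ : Equiv.Perm (Fin M)) (p : Fin (M + 1)) :
    valleyCount (insertMax σ p) =
      valleyCount σ + if ↑p ∈ peakSlots false (descents 0 (permList σ)) then 0 else 1 := by
  have hlt : ∀ x ∈ permList σ, x < M := by
    simp only [permList, List.mem_ofFn]
    rintro _ ⟨i, rfl⟩
    exact (σ i).isLt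
  have hp : ↑p < (descents 0 (permList σ)).length := by
    simp [length_descents, permList, p.is_lt]
  rw [valleyCount_eq_card_adjPairs, permList_insertMax,
    descents_insertIdx hlt (Nat.zero_le M) (by simpa [permList] using p.is_le),
    ← card_adjPairs_true_false_cons_false, card_adjPairs_cons_insertPeak _ _ _ hp,
    card_adjPairs_true_false_cons_false, valleyCount_eq_card_adjPairs]

theorem card_peakSlots_descents (σ : Equiv.Perm (Fin M)) (hM : 1 ≤ M) :
    #(peakSlots false (descents 0 (permList σ))) = 2 * valleyCount σ + 2 := by
  obtain ⟨x, t, hxt⟩ : ∃ x t, permList σ = x :: t := List.exists_cons_of_ne_nil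
    (List.ne_nil_of_length_pos (by rw [permList, List.length_ofFn]; omega))
  rw [valleyCount_eq_card_adjPairs, hxt, descents, decide_eq_false (Nat.not_lt_zero x),
    card_peakSlots _ (getLastD_descents _ _ _)]

theorem card_filter_valleyCount_insertMax_self (σ : Equiv.Perm (Fin M)) (hM : 1 ≤ M) :
    #{p | valleyCount (insertMax σ p) = valleyCount σ} = 2 * valleyCount σ + 2 := by
  simp only [valleyCount_insertMax, add_eq_left, ite_eq_left_iff, one_ne_zero, imp_false,
    not_not]
  have hsub : peakSlots false (descents 0 (permList σ)) ⊆ range (M + 1) := by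
    have := peakSlots_subset_range false (descents 0 (permList σ))
    rwa [length_descents, permList, List.length_ofFn] at this
  rw [card_filter_val_mem hsub, card_peakSlots_descents σ hM]

theorem card_filter_valleyCount_insertMax (σ : Equiv.Perm (Fin M)) (hM : 1 ≤ M) (k : ℕ) :
    #{p | valleyCount (insertMax σ p) = k} =
      if k = valleyCount σ then 2 * valleyCount σ + 2
      else if k = valleyCount σ + 1 then M + 1 - (2 * valleyCount σ + 2) else 0 := by
  have hstep : ∀ p, valleyCount (insertMax σ p) = valleyCount σ ∨
      valleyCount (insertMax σ p) = valleyCount σ + 1 := by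
    intro p
    rw [valleyCount_insertMax]
    split_ifs <;> simp
  rw [card_filter_eq_of_forall_eq_or_eq_add_one _ _ hstep,
    card_filter_valleyCount_insertMax_self σ hM, Fintype.card_fin]

end insertMax

theorem P_eq_card (m k : ℕ) : P m k = #{π : Equiv.Perm (Fin m) | valleyCount π = k} := by
  rw [P, Nat.card_eq_fintype_card, Fintype.card_subtype]

theorem P_succ (M k : ℕ) (hM : 1 ≤ M) (hk : 1 ≤ k) :
    P (M + 1) k = 2 * (k + 1) * P M k + (M + 1 - 2 * k) * P M (k - 1) := by
  have hσ : ∀ σ : Equiv.Perm (Fin M), #{p | valleyCount (insertMax σ p) = k} =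
      2 * (k + 1) * (if valleyCount σ = k then 1 else 0) +
        (M + 1 - 2 * k) * (if valleyCount σ = k - 1 then 1 else 0) := by
    intro σ
    rw [card_filter_valleyCount_insertMax σ hM]
    split_ifs <;> omega
  rw [P_eq_card, card_filter, ← insertMax_bijective.sum_comp, Fintype.sum_prod_type]
  simp only [hσ, sum_add_distrib, ← mul_sum, sum_boole, Nat.cast_id, ← P_eq_card]

end Valley

/-- `P(n,k) = 2(k+1)·P(n-1,k) + (n-2k)·P(n-1,k-1)` for `n ≥ 2`, `k ≥ 1`. -/
theorem valley_recurrence (n k : ℕ) (hn : 2 ≤ n) (hk : 1 ≤ k) :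
    P n k = 2 * (k + 1) * P (n - 1) k + (n - 2 * k) * P (n - 1) (k - 1) := by
  obtain ⟨M, rfl⟩ : ∃ M, n = M + 1 := ⟨n - 1, by omega⟩
  rw [Nat.add_sub_cancel]
  exact Valley.P_succ M k (by omega) hk
end

section
/- P(n,1) = 4·P(n-1,1) + (n-2)·2^{n-2} for all n ≥ 3, where P(n,1) is the number of permutations of {1,...,n} with exactly one valley. -/
/-!
Every permutation of `Fin (m + 1)` arises exactly once by inserting the new maximum `m` into one
of the `m + 1` gaps of the word of a permutation of `Fin m`. Such an insertion never destroys a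
valley, and it creates exactly one new valley when the gap lies just after a double descent or
just before a double ascent (letters beyond the ends counting as smaller than all others), and
none otherwise. Every position is a fall, a rise, both (a valley) or neither, while each of the
`m - 1` adjacent pairs yields exactly one fall or rise; so a word with `v` valleys has
`m - 1 - 2v` double ascents and descents, hence `m - 1 - 2v` valley-creating gaps and `2v + 2`
others. This gives `P(m+1, k+1) = (2k+4) P(m, k+1) + (m-1-2k) P(m, k)` and
`P(m, 0) = 2^(m-1)`.
-/

open Finset Equiv

theorem Finset.card_filter_add_ite_mem_eq {α : Type*} [DecidableEq α] {s t : Finset α}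
    (h : t ⊆ s) (v k : ℕ) :
    #{j ∈ s | v + (if j ∈ t then 1 else 0) = k} =
      if v = k then #s - #t else if v + 1 = k then #t else 0 := by
  split_ifs
  · rw [← card_sdiff_of_subset h, ← filter_notMem_eq_sdiff]
    exact congrArg card (filter_congr fun j _ => by split_ifs <;> simp_all)
  · rw [← inter_eq_right.2 h, ← filter_mem_eq_inter]
    exact congrArg card (filter_congr fun j _ => by split_ifs <;> simp_all)
  · exact card_eq_zero.2 (filter_eq_empty_iff.2 fun j _ => by split_ifs <;> omega)

section Word

variable (m : ℕ) (w : ℕ → ℕ)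

/- `w` is a word of length `m`: position `0` is never a fall and position `m - 1` never a rise,
so neither is a valley, while a double ascent may start at `0` and a double descent may end at
`m - 1`. -/

def FallsAt (i : ℕ) : Prop := 0 < i ∧ w i < w (i - 1)

def RisesAt (i : ℕ) : Prop := i + 1 < m ∧ w i < w (i + 1)

def IsValley (i : ℕ) : Prop := FallsAt w i ∧ RisesAt m w i

instance (i : ℕ) : Decidable (FallsAt w i) := inferInstanceAs (Decidable (_ ∧ _))
instance (i : ℕ) : Decidable (RisesAt m w i) := inferInstanceAs (Decidable (_ ∧ _))
instance (i : ℕ) : Decidable (IsValley m w i) := inferInstanceAs (Decidable (_ ∧ _))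

def valleys : Finset ℕ := {i ∈ range m | IsValley m w i}

def doubleAscents : Finset ℕ := {i ∈ range m | RisesAt m w i ∧ ¬FallsAt w i}

def doubleDescents : Finset ℕ := {i ∈ range m | FallsAt w i ∧ ¬RisesAt m w i}

variable {m w}

theorem mem_valleys {i : ℕ} : i ∈ valleys m w ↔ i < m ∧ IsValley m w i := by
  rw [valleys, mem_filter, mem_range]

theorem mem_doubleAscents {i : ℕ} :
    i ∈ doubleAscents m w ↔ i < m ∧ RisesAt m w i ∧ ¬FallsAt w i := by
  rw [doubleAscents, mem_filter, mem_range]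

theorem mem_doubleDescents {i : ℕ} :
    i ∈ doubleDescents m w ↔ i < m ∧ FallsAt w i ∧ ¬RisesAt m w i := by
  rw [doubleDescents, mem_filter, mem_range]

theorem doubleAscents_subset_range : doubleAscents m w ⊆ range m := filter_subset _ _

theorem doubleDescents_subset_range : doubleDescents m w ⊆ range m := filter_subset _ _

theorem card_fallsAt_add_card_risesAt (hw : ∀ i, i + 1 < m → w i ≠ w (i + 1)) :
    #{i ∈ range m | FallsAt w i} + #{i ∈ range m | RisesAt m w i} = m - 1 := by
  rcases m with _ | n
  · rfl
  have hstep : ∀ i ∈ range n,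
      ((if FallsAt w (i + 1) then 1 else 0) + if RisesAt (n + 1) w i then 1 else 0) = 1 := by
    intro i hi
    have hi : i < n := mem_range.mp hi
    have hfall : FallsAt w (i + 1) ↔ w (i + 1) < w i := by simp [FallsAt]
    have hrise : RisesAt (n + 1) w i ↔ w i < w (i + 1) := by simp [RisesAt, hi]
    have := hw i (by omega)
    rw [if_congr hfall rfl rfl, if_congr hrise rfl rfl]
    split_ifs <;> omega
  rw [card_filter, card_filter, sum_range_succ', sum_range_succ, ← add_assoc,
    add_right_comm _ _ (∑ i ∈ range n, _), ← sum_add_distrib, sum_congr rfl hstep]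
  simp [FallsAt, RisesAt]

theorem two_mul_card_valleys_add_card_doubleAscents_add_card_doubleDescents
    (hw : ∀ i, i + 1 < m → w i ≠ w (i + 1)) :
    2 * #(valleys m w) + #(doubleAscents m w) + #(doubleDescents m w) = m - 1 := by
  have hvalleys : {i ∈ range m | FallsAt w i ∧ RisesAt m w i} = valleys m w := rfl
  have hvalleys' : {i ∈ range m | RisesAt m w i ∧ FallsAt w i} = valleys m w :=
    filter_congr fun _ _ => and_comm
  rw [← card_fallsAt_add_card_risesAt hw,
    ← card_filter_add_card_filter_not (s := {i ∈ range m | FallsAt w i}) (RisesAt m w),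
    ← card_filter_add_card_filter_not (s := {i ∈ range m | RisesAt m w i}) (FallsAt w),
    filter_filter, filter_filter, filter_filter, filter_filter, hvalleys, hvalleys']
  rw [doubleAscents, doubleDescents]
  omega

variable (w) in
def insertAt (j M : ℕ) : ℕ → ℕ :=
  fun i => if i < j then w i else if i = j then M else w (i - 1)

section insertAt

variable {i j M : ℕ}

theorem isValley_insertAt_of_succ_lt (hj : j ≤ m) (hi : i + 1 < j) :
    IsValley (m + 1) (insertAt w j M) i ↔ IsValley m w i := by
  simp only [IsValley, FallsAt, RisesAt, insertAt, Nat.add_sub_cancel]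
  split_ifs <;> omega

theorem isValley_insertAt_pred (hj : j ≤ m) (hM : ∀ i < m, w i < M) (hj₀ : 0 < j) :
    IsValley (m + 1) (insertAt w j M) (j - 1) ↔ FallsAt w (j - 1) := by
  have := hM (j - 1) (by omega)
  simp only [IsValley, FallsAt, RisesAt, insertAt, Nat.add_sub_cancel]
  split_ifs <;> omega

theorem not_isValley_insertAt_self (hj : j ≤ m) (hM : ∀ i < m, w i < M) :
    ¬IsValley (m + 1) (insertAt w j M) j := by
  rintro ⟨⟨hj₀, hfall⟩, -⟩
  have := hM (j - 1) (by omega)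
  simp only [insertAt] at hfall
  split_ifs at hfall <;> omega

theorem isValley_insertAt_succ_self (hM : ∀ i < m, w i < M) (hj : j < m) :
    IsValley (m + 1) (insertAt w j M) (j + 1) ↔ RisesAt m w j := by
  have := hM j hj
  simp only [IsValley, FallsAt, RisesAt, insertAt, Nat.add_sub_cancel]
  split_ifs <;> omega

theorem isValley_insertAt_succ (hi : j < i) :
    IsValley (m + 1) (insertAt w j M) (i + 1) ↔ IsValley m w i := by
  simp only [IsValley, FallsAt, RisesAt, insertAt, Nat.add_sub_cancel]
  split_ifs <;> omega

theorem sum_isValley_insertAt_range_left (hj : j ≤ m) (hM : ∀ i < m, w i < M) :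
    ∑ i ∈ range j, (if IsValley (m + 1) (insertAt w j M) i then 1 else 0) =
      ∑ i ∈ range j, (if IsValley m w i then 1 else 0) +
        if j - 1 ∈ doubleDescents m w then 1 else 0 := by
  rcases j with _ | k
  · simp [doubleDescents, show ¬FallsAt w 0 from fun h => h.1.false]
  have hk : k < m := by omega
  have hpred := isValley_insertAt_pred hj hM (Nat.succ_pos k)
  rw [Nat.add_sub_cancel] at hpred
  rw [sum_range_succ, sum_range_succ, if_congr hpred rfl rfl, Nat.add_sub_cancel,
    sum_congr rfl fun i hi => if_congr
      (isValley_insertAt_of_succ_lt hj (by simpa using hi)) rfl rfl]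
  by_cases hfall : FallsAt w k <;> by_cases hrise : RisesAt m w k <;>
    simp [IsValley, doubleDescents, hfall, hrise, hk]

theorem sum_isValley_insertAt_range_right (hM : ∀ i < m, w i < M) :
    ∑ i ∈ range (m - j), (if IsValley (m + 1) (insertAt w j M) (j + (i + 1)) then 1 else 0) =
      ∑ i ∈ range (m - j), (if IsValley m w (j + i) then 1 else 0) +
        if j ∈ doubleAscents m w then 1 else 0 := by
  rcases h : m - j with _ | r
  · have : j ∉ doubleAscents m w := fun hj => by have := (mem_doubleAscents.1 hj).1; omega
    simp [this]
  have hj : j < m := by omega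
  have hshift (i : ℕ) : j + (i + 1 + 1) = j + (i + 1) + 1 := by ring
  rw [sum_range_succ', sum_range_succ', zero_add, add_zero,
    if_congr (isValley_insertAt_succ_self hM hj) rfl rfl]
  simp (disch := omega) only [hshift, isValley_insertAt_succ]
  by_cases hfall : FallsAt w j <;> by_cases hrise : RisesAt m w j <;>
    simp [IsValley, doubleAscents, hfall, hrise, hj]

theorem card_valleys_insertAt (hj : j ≤ m) (hM : ∀ i < m, w i < M) :
    #(valleys (m + 1) (insertAt w j M)) =
      #(valleys m w) + (if j - 1 ∈ doubleDescents m w then 1 else 0) +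
        (if j ∈ doubleAscents m w then 1 else 0) := by
  have hsplit (n : ℕ) (f : ℕ → ℕ) (hn : j ≤ n) :
      ∑ i ∈ range n, f i = ∑ i ∈ range j, f i + ∑ i ∈ range (n - j), f (j + i) := by
    rw [← sum_range_add, Nat.add_sub_cancel' hn]
  rw [valleys, valleys, card_filter, card_filter, hsplit (m + 1) _ (by omega),
    hsplit m _ hj, show m + 1 - j = m - j + 1 by omega, sum_range_succ',
    add_zero, if_neg (not_isValley_insertAt_self hj hM), add_zero,
    sum_isValley_insertAt_range_left hj hM, sum_isValley_insertAt_range_right hM]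
  ring

end insertAt

variable (m w) in
/-- The gaps `j ≤ m` where inserting a new maximum before the `j`-th letter creates a valley. -/
def valleyGaps : Finset ℕ :=
  {j ∈ range (m + 1) | j - 1 ∈ doubleDescents m w ∨ j ∈ doubleAscents m w}

theorem not_mem_doubleDescents_and_mem_doubleAscents (hw : ∀ i, i + 1 < m → w i ≠ w (i + 1))
    (j : ℕ) : ¬(j - 1 ∈ doubleDescents m w ∧ j ∈ doubleAscents m w) := by
  rcases j with _ | j
  · simp [mem_doubleDescents, FallsAt]
  simp only [mem_doubleDescents, mem_doubleAscents, FallsAt, RisesAt, Nat.add_sub_cancel]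
  have := hw j
  omega

theorem card_valleyGaps (hw : ∀ i, i + 1 < m → w i ≠ w (i + 1)) :
    #(valleyGaps m w) = #(doubleDescents m w) + #(doubleAscents m w) := by
  rw [valleyGaps, filter_or, card_union_of_disjoint (disjoint_filter.2 fun j _ h h' =>
    not_mem_doubleDescents_and_mem_doubleAscents hw j ⟨h, h'⟩)]
  congr 1
  · rw [card_filter, sum_range_succ', zero_tsub,
      if_neg fun h => (mem_doubleDescents.1 h).2.1.1.false, add_zero]
    simp only [Nat.add_sub_cancel]
    rw [← card_filter, filter_mem_eq_inter, inter_eq_right.2 doubleDescents_subset_range]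
  · rw [filter_mem_eq_inter, inter_eq_right.2
      (doubleAscents_subset_range.trans (range_subset_range.2 m.le_succ))]

theorem valleyGaps_subset_range : valleyGaps m w ⊆ range (m + 1) := filter_subset _ _

theorem card_valleys_insertAt_of_ne (hw : ∀ i, i + 1 < m → w i ≠ w (i + 1)) {j M : ℕ}
    (hj : j ≤ m) (hM : ∀ i < m, w i < M) :
    #(valleys (m + 1) (insertAt w j M)) =
      #(valleys m w) + if j ∈ valleyGaps m w then 1 else 0 := by
  have := not_mem_doubleDescents_and_mem_doubleAscents hw j
  have hj' : j < m + 1 := Nat.lt_succ_of_le hj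
  rw [card_valleys_insertAt hj hM]
  by_cases hd : j - 1 ∈ doubleDescents m w <;> by_cases ha : j ∈ doubleAscents m w <;>
    simp_all [valleyGaps]

theorem card_valleyGaps_add_two_mul_card_valleys (hw : ∀ i, i + 1 < m → w i ≠ w (i + 1)) :
    #(valleyGaps m w) + 2 * #(valleys m w) = m - 1 := by
  have := two_mul_card_valleys_add_card_doubleAscents_add_card_doubleDescents hw
  rw [card_valleyGaps hw]
  omega

end Word

section insertMax

variable {m : ℕ}

/-- The permutation whose word is that of `σ` with the letter `m` inserted at position `j`. -/
def insertMax (j : Fin (m + 1)) (σ : Perm (Fin m)) : Perm (Fin (m + 1)) :=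
  ((finSuccEquiv' j).trans (optionCongr σ)).trans (finSuccEquiv' (Fin.last m)).symm

theorem insertMax_apply_succAbove (j : Fin (m + 1)) (σ : Perm (Fin m)) (x : Fin m) :
    insertMax j σ (j.succAbove x) = (σ x).castSucc := by
  simp [insertMax]

theorem insertMax_apply_self (j : Fin (m + 1)) (σ : Perm (Fin m)) :
    insertMax j σ j = Fin.last m := by
  simp [insertMax]

theorem permWord_insertMax (j : Fin (m + 1)) (σ : Perm (Fin m)) :
    permWord (insertMax j σ) = insertAt (permWord σ) j m := by
  funext i
  rcases lt_trichotomy i j with h | rfl | h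
  · have hi : i < m := by omega
    have hsucc : j.succAbove ⟨i, hi⟩ = ⟨i, by omega⟩ := Fin.succAbove_of_castSucc_lt _ _ h
    simp [permWord, insertAt, h, hi, Nat.lt_succ_of_lt hi, ← hsucc, insertMax_apply_succAbove]
  · simp [permWord, insertAt, j.isLt, insertMax_apply_self]
  rcases lt_or_ge i (m + 1) with hi | hi
  · have hsucc : j.succAbove ⟨i - 1, by omega⟩ = ⟨i, hi⟩ := by
      rw [Fin.succAbove_of_le_castSucc _ _ (by rw [Fin.le_def]; simp only [Fin.castSucc_mk]; omega)]
      ext; simp only [Fin.succ_mk]; omega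
    simp [permWord, insertAt, hi, not_lt_of_gt h, h.ne', show i - 1 < m by omega, ← hsucc,
      insertMax_apply_succAbove]
  · simp [permWord, insertAt, not_lt_of_gt h, h.ne', show m < i by omega,
      show ¬i - 1 < m by omega]

theorem insertMax_injective :
    Function.Injective fun x : Perm (Fin m) × Fin (m + 1) => insertMax x.2 x.1 := by
  rintro ⟨σ, j⟩ ⟨τ, k⟩ h
  simp only at h
  obtain rfl : j = k := (insertMax k τ).injective <| by
    rw [insertMax_apply_self, ← h, insertMax_apply_self]
  obtain rfl : σ = τ := Equiv.ext fun x => Fin.castSucc_injective m <| by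
    rw [← insertMax_apply_succAbove, ← insertMax_apply_succAbove, h]
  rfl

noncomputable def insertMaxEquiv (m : ℕ) : Perm (Fin m) × Fin (m + 1) ≃ Perm (Fin (m + 1)) :=
  Equiv.ofBijective _ <| (Fintype.bijective_iff_injective_and_card _).2
    ⟨insertMax_injective, by simp [Fintype.card_perm, Nat.factorial_succ, mul_comm]⟩

end insertMax

section valleyCount

variable {m : ℕ}

theorem valleyCount_eq_card_valleys {n : ℕ} (π : Perm (Fin n)) :
    valleyCount π = #(valleys n (permWord π)) := by
  rw [valleyCount]
  congr 1
  ext i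
  simp only [mem_filter, mem_Ioo, mem_valleys, IsValley, FallsAt, RisesAt]
  omega

theorem permWord_lt {n : ℕ} (π : Perm (Fin n)) {i : ℕ} (hi : i < n) : permWord π i < n := by
  simp [permWord, hi]

theorem permWord_ne_succ {n : ℕ} (π : Perm (Fin n)) {i : ℕ} (hi : i + 1 < n) :
    permWord π i ≠ permWord π (i + 1) := by
  simp [permWord, hi, Nat.lt_of_succ_lt hi, Fin.val_eq_val, π.injective.eq_iff]

theorem card_valleyCount_insertMax_eq (hm : 0 < m) (σ : Perm (Fin m)) (k : ℕ) :
    #{j : Fin (m + 1) | valleyCount (insertMax j σ) = k} =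
      if valleyCount σ = k then 2 * k + 2
      else if valleyCount σ + 1 = k then m - 1 - 2 * valleyCount σ else 0 := by
  have hgaps : #(valleyGaps m (permWord σ)) + 2 * valleyCount σ = m - 1 := by
    rw [valleyCount_eq_card_valleys]
    exact card_valleyGaps_add_two_mul_card_valleys fun _ => permWord_ne_succ σ
  have hins (j : Fin (m + 1)) : valleyCount (insertMax j σ) =
      valleyCount σ + if (j : ℕ) ∈ valleyGaps m (permWord σ) then 1 else 0 := by
    rw [valleyCount_eq_card_valleys, valleyCount_eq_card_valleys, permWord_insertMax,
      card_valleys_insertAt_of_ne (fun _ => permWord_ne_succ σ) j.is_le fun _ => permWord_lt σ]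
  simp_rw [hins]
  rw [card_filter, Fin.sum_univ_eq_sum_range (fun j =>
      if valleyCount σ + (if j ∈ valleyGaps m (permWord σ) then 1 else 0) = k then 1 else 0),
    ← card_filter, card_filter_add_ite_mem_eq valleyGaps_subset_range, card_range]
  split_ifs <;> omega

theorem P_succ_eq_sum (k : ℕ) :
    P (m + 1) k = ∑ σ : Perm (Fin m), #{j : Fin (m + 1) | valleyCount (insertMax j σ) = k} := by
  rw [P, Nat.card_eq_fintype_card,
    ← Fintype.card_congr ((insertMaxEquiv m).subtypeEquiv fun _ => Iff.rfl),
    Fintype.card_subtype, card_filter, Fintype.sum_prod_type]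
  simp only [card_filter]
  rfl

theorem sum_ite_valleyCount_eq (k c : ℕ) :
    ∑ σ : Perm (Fin m), (if valleyCount σ = k then c else 0) = c * P m k := by
  rw [← sum_filter, sum_const, smul_eq_mul, P, Nat.card_eq_fintype_card, Fintype.card_subtype,
    mul_comm]

theorem P_succ_zero_right (hm : 0 < m) : P (m + 1) 0 = 2 * P m 0 := by
  rw [P_succ_eq_sum, ← sum_ite_valleyCount_eq]
  refine sum_congr rfl fun σ _ => ?_
  rw [card_valleyCount_insertMax_eq hm]
  split_ifs <;> simp_all

theorem P_succ_succ (hm : 0 < m) (k : ℕ) :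
    P (m + 1) (k + 1) = (2 * k + 4) * P m (k + 1) + (m - 1 - 2 * k) * P m k := by
  rw [P_succ_eq_sum, ← sum_ite_valleyCount_eq, ← sum_ite_valleyCount_eq, ← sum_add_distrib]
  refine sum_congr rfl fun σ _ => ?_
  rw [card_valleyCount_insertMax_eq hm]
  split_ifs <;> omega

theorem P_zero_right (hm : 0 < m) : P m 0 = 2 ^ (m - 1) := by
  induction m, hm using Nat.le_induction with
  | base => rw [P, Nat.card_eq_fintype_card]; decide
  | succ m hm ih =>
    rw [P_succ_zero_right hm, ih, ← pow_succ', Nat.add_sub_cancel, Nat.sub_add_cancel hm]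

end valleyCount

/-- `P(n,1) = 4·P(n-1,1) + (n-2)·2^(n-2)` for all `n ≥ 3`. -/
theorem one_valley_recurrence (n : ℕ) (hn : 3 ≤ n) :
    P n 1 = 4 * P (n - 1) 1 + (n - 2) * 2 ^ (n - 2) := by
  obtain ⟨m, rfl⟩ : ∃ m, n = m + 1 := ⟨n - 1, by omega⟩
  rw [P_succ_succ (by omega) 0, P_zero_right (by omega)]
  simp only [Nat.add_sub_cancel, show m + 1 - 2 = m - 1 by omega, mul_zero, Nat.sub_zero, zero_add]
end

section
/- The two-variable generating function V(x,y) = sum_{n,k ≥ 1} V_{n,k} x^n y^k of valleyless sequences of length n with maximum entry k satisfies the functional equation V(x,y) = xy/(1-x) + y·V(x,y)/(1-x)^2, and hence V(x,y) = xy / (1 - x - y/(1-x)). -/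
/-!
A valleyless sequence is unimodal. Cut a sequence of length `n + 1` with maximum `k + 1` at the
last occurrence of its maximum: the entries before it increase weakly in `[1, k + 1]`, those after
it decrease weakly in `[1, k]`. Subtracting one from the former and reflecting the latter by
`v ↦ 2k + 1 - v` gives a weakly increasing sequence of length `n` in `[0, 2k]`, from which the cut
is recovered as the number of entries `≤ k`. By stars and bars,
`V_{n+1,k+1} = C(n + 2k, n)`. So `V = xy·W` with `W = ∑ C(n + 2k, n) xⁿ yᵏ`, and
`(1 - x)² W = (1 - x) + y W` is Pascal's rule applied twice.
-/

open MvPowerSeries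

/-- `Vnk n k`: the number of valleyless sequences of length `n` of positive integers with
maximum entry exactly `k`. -/
noncomputable def Vnk (n k : ℕ) : ℕ :=
  Nat.card {s : Fin n → ℕ // (∀ i, 0 < s i) ∧ SeqValleyless s ∧
    (∀ i, s i ≤ k) ∧ (∃ i, s i = k)}

/-- The generating function `V(x,y) = ∑_{n,k ≥ 1} V_{n,k} xⁿ yᵏ`; the variable `x` is
indexed by `0` and `y` by `1`. -/
noncomputable def Vgf : MvPowerSeries (Fin 2) ℚ :=
  fun d => if 1 ≤ d 0 ∧ 1 ≤ d 1 then (Vnk (d 0) (d 1) : ℚ) else 0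

open Finset

section Unimodal

variable {n : ℕ} {s : Fin n → ℕ} {p : Fin n}

lemma SeqValleyless.monotoneOn_Iic (hs : SeqValleyless s) (hp : ∀ i, s i ≤ s p) :
    MonotoneOn s (Set.Iic p) := by
  intro i _ j (hj : j ≤ p) hij
  rcases hij.eq_or_lt with rfl | hij
  · rfl
  rcases hj.eq_or_lt with rfl | hj
  · exact hp i
  simpa [min_eq_left (hp i)] using hs i j p hij hj

lemma SeqValleyless.antitoneOn_Ici (hs : SeqValleyless s) (hp : ∀ i, s i ≤ s p) :
    AntitoneOn s (Set.Ici p) := by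
  intro i (hi : p ≤ i) j _ hij
  rcases hij.eq_or_lt with rfl | hij
  · rfl
  rcases hi.eq_or_lt with rfl | hi
  · exact hp j
  simpa [min_eq_right (hp j)] using hs p i j hi hij

lemma seqValleyless_of_monotoneOn_of_antitoneOn (hmono : MonotoneOn s (Set.Iic p))
    (hanti : AntitoneOn s (Set.Ici p)) : SeqValleyless s := by
  intro i j l hij hjl
  rcases le_total j p with hjp | hpj
  · exact (min_le_left _ _).trans (hmono (hij.le.trans hjp) hjp hij.le)
  · exact (min_le_right _ _).trans (hanti hpj (hpj.trans hjl.le) hjl.le)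

end Unimodal

section Fold

variable {n k : ℕ}

def foldVal (k v : ℕ) : ℕ := if v ≤ k then v + 1 else 2 * k + 1 - v

lemma foldVal_of_le {v : ℕ} (h : v ≤ k) : foldVal k v = v + 1 := if_pos h

lemma foldVal_of_lt {v : ℕ} (h : k < v) : foldVal k v = 2 * k + 1 - v := if_neg h.not_ge

lemma foldVal_pos (v : ℕ) (hv : v ≤ 2 * k) : 0 < foldVal k v := by
  unfold foldVal; split_ifs <;> omega

lemma foldVal_le (v : ℕ) : foldVal k v ≤ k + 1 := by
  unfold foldVal; split_ifs <;> omega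

lemma eq_of_foldVal_eq {a b : ℕ} (ha : a ≤ 2 * k) (hb : b ≤ 2 * k) (hab : a ≤ k ↔ b ≤ k)
    (h : foldVal k a = foldVal k b) : a = b := by
  unfold foldVal at h
  split_ifs at h <;> omega

def peakPos (k : ℕ) (w : Fin n → ℕ) : Fin (n + 1) :=
  ⟨#{i | w i ≤ k}, Nat.lt_succ_of_le ((card_filter_le _ _).trans_eq (card_fin n))⟩

def insertPeak (k : ℕ) (w : Fin n → ℕ) : Fin (n + 1) → ℕ :=
  Fin.insertNth (peakPos k w) (k + 1) fun i => foldVal k (w i)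

variable {w : Fin n → ℕ}

lemma castSucc_lt_peakPos_iff (hw : Monotone w) {i : Fin n} :
    i.castSucc < peakPos k w ↔ w i ≤ k :=
  Tuple.lt_card_le_iff_apply_le_of_monotone hw

@[simp]
lemma insertPeak_peakPos : insertPeak k w (peakPos k w) = k + 1 :=
  Fin.insertNth_apply_same _ _ _

@[simp]
lemma insertPeak_succAbove (i : Fin n) :
    insertPeak k w ((peakPos k w).succAbove i) = foldVal k (w i) :=
  Fin.insertNth_apply_succAbove _ _ _ _

lemma insertPeak_pos (hb : ∀ i, w i ≤ 2 * k) (j : Fin (n + 1)) : 0 < insertPeak k w j := by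
  induction j using (peakPos k w).succAboveCases with
  | x => simp
  | p i => simpa using foldVal_pos _ (hb i)

lemma insertPeak_le (j : Fin (n + 1)) : insertPeak k w j ≤ k + 1 := by
  induction j using (peakPos k w).succAboveCases with
  | x => simp
  | p i => simpa using foldVal_le _

lemma insertPeak_le_of_peakPos_lt (hw : Monotone w) {j : Fin (n + 1)} (hj : peakPos k w < j) :
    insertPeak k w j ≤ k := by
  obtain ⟨i, rfl⟩ := Fin.exists_succAbove_eq hj.ne'
  rw [Fin.lt_succAbove_iff_le_castSucc, ← not_lt, castSucc_lt_peakPos_iff hw, not_le] at hj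
  rw [insertPeak_succAbove, foldVal_of_lt hj]
  omega

lemma monotoneOn_insertPeak (hw : Monotone w) :
    MonotoneOn (insertPeak k w) (Set.Iic (peakPos k w)) := by
  intro x _ y (hy : y ≤ peakPos k w) hxy
  rcases hy.eq_or_lt with rfl | hy
  · simpa using insertPeak_le x
  obtain ⟨b, rfl⟩ := Fin.exists_succAbove_eq hy.ne
  obtain ⟨a, rfl⟩ := Fin.exists_succAbove_eq (hxy.trans_lt hy).ne
  rw [Fin.succAbove_le_succAbove_iff] at hxy
  rw [Fin.succAbove_lt_iff_castSucc_lt, castSucc_lt_peakPos_iff hw] at hy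
  simp [foldVal_of_le, hy, (hw hxy).trans hy, hw hxy]

lemma antitoneOn_insertPeak (hw : Monotone w) (hb : ∀ i, w i ≤ 2 * k) :
    AntitoneOn (insertPeak k w) (Set.Ici (peakPos k w)) := by
  intro x (hx : peakPos k w ≤ x) y _ hxy
  rcases hx.eq_or_lt with rfl | hx
  · simpa using insertPeak_le y
  obtain ⟨a, rfl⟩ := Fin.exists_succAbove_eq hx.ne'
  obtain ⟨b, rfl⟩ := Fin.exists_succAbove_eq (hx.trans_le hxy).ne'
  rw [Fin.succAbove_le_succAbove_iff] at hxy
  rw [Fin.lt_succAbove_iff_le_castSucc, ← not_lt, castSucc_lt_peakPos_iff hw, not_le] at hx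
  simp only [insertPeak_succAbove, foldVal_of_lt hx, foldVal_of_lt (hx.trans_le (hw hxy))]
  have := hw hxy
  have := hb b
  omega

end Fold

section Unfold

variable {n k : ℕ} {s : Fin (n + 1) → ℕ} {p : Fin (n + 1)}

def removePeak (k : ℕ) (p : Fin (n + 1)) (s : Fin (n + 1) → ℕ) : Fin n → ℕ := fun i =>
  if i.castSucc < p then s (p.succAbove i) - 1 else 2 * k + 1 - s (p.succAbove i)

lemma removePeak_le_iff (hpos : ∀ j, 0 < s j) (hle : ∀ j, s j ≤ k + 1)
    (hlast : ∀ j, p < j → s j ≤ k) (i : Fin n) :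
    removePeak k p s i ≤ k ↔ i.castSucc < p := by
  unfold removePeak
  split_ifs with h
  · simpa [h] using hle (p.succAbove i)
  · have := hlast (p.succAbove i) ((Fin.lt_succAbove_iff_le_castSucc _ _).2 (not_lt.1 h))
    have := hpos (p.succAbove i)
    simp only [h, iff_false]
    omega

lemma removePeak_le (hpos : ∀ j, 0 < s j) (hle : ∀ j, s j ≤ k + 1) (i : Fin n) :
    removePeak k p s i ≤ 2 * k := by
  have := hpos (p.succAbove i)
  have := hle (p.succAbove i)
  unfold removePeak
  split_ifs <;> omega

lemma monotone_removePeak (hv : SeqValleyless s) (hpos : ∀ j, 0 < s j)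
    (hle : ∀ j, s j ≤ k + 1) (hp : s p = k + 1) (hlast : ∀ j, p < j → s j ≤ k) :
    Monotone (removePeak k p s) := by
  have hmax : ∀ j, s j ≤ s p := hp ▸ hle
  have hside := removePeak_le_iff hpos hle hlast
  intro a b hab
  have hab' : p.succAbove a ≤ p.succAbove b := Fin.succAbove_le_succAbove_iff.2 hab
  by_cases hb : b.castSucc < p
  · have ha : a.castSucc < p := (Fin.castSucc_le_castSucc_iff.2 hab).trans_lt hb
    have := hv.monotoneOn_Iic hmax
      ((Fin.succAbove_lt_iff_castSucc_lt _ _).2 ha).le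
      ((Fin.succAbove_lt_iff_castSucc_lt _ _).2 hb).le hab'
    simp only [removePeak, ha, hb, if_true]
    omega
  by_cases ha : a.castSucc < p
  · exact ((hside a).2 ha).trans (not_le.1 (mt (hside b).1 hb)).le
  have := hv.antitoneOn_Ici hmax
    ((Fin.lt_succAbove_iff_le_castSucc _ _).2 (not_lt.1 ha)).le
    ((Fin.lt_succAbove_iff_le_castSucc _ _).2 (not_lt.1 hb)).le hab'
  simp only [removePeak, ha, hb, if_false]
  omega

lemma peakPos_removePeak (hpos : ∀ j, 0 < s j) (hle : ∀ j, s j ≤ k + 1)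
    (hlast : ∀ j, p < j → s j ≤ k) :
    peakPos k (removePeak k p s) = p := by
  ext
  simp only [peakPos, removePeak_le_iff hpos hle hlast, Fin.lt_def, Fin.val_castSucc,
    Fin.card_filter_val_lt]
  omega

lemma insertPeak_removePeak (hpos : ∀ j, 0 < s j) (hle : ∀ j, s j ≤ k + 1) (hp : s p = k + 1)
    (hlast : ∀ j, p < j → s j ≤ k) :
    insertPeak k (removePeak k p s) = s := by
  rw [insertPeak, peakPos_removePeak hpos hle hlast, Fin.insertNth_eq_iff]
  refine ⟨hp.symm, funext fun i => ?_⟩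
  have hside := removePeak_le_iff hpos hle hlast i
  have := hpos (p.succAbove i)
  show foldVal k (removePeak k p s i) = s (p.succAbove i)
  by_cases h : i.castSucc < p
  · rw [foldVal_of_le (hside.2 h)]
    simp only [removePeak, h, if_true]
    omega
  · rw [foldVal_of_lt (not_le.1 (mt hside.1 h))]
    have := hlast (p.succAbove i) ((Fin.lt_succAbove_iff_le_castSucc _ _).2 (not_lt.1 h))
    simp only [removePeak, h, if_false]
    omega

end Unfold

section StarsAndBars

lemma add_sub_le_of_strictMono {n : ℕ} {u : Fin n → ℕ} (hu : StrictMono u) {i j : Fin n}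
    (hij : i ≤ j) : u i + (j - i : ℕ) ≤ u j := by
  suffices ∀ d (j : Fin n), (i : ℕ) + d = j → u i + d ≤ u j from
    this _ j (by rw [Fin.le_def] at hij; omega)
  intro d
  induction d with
  | zero => intro j h; simp [Fin.ext h]
  | succ d ih =>
    intro j h
    have h₁ := ih ⟨j - 1, by omega⟩ (by simp; omega)
    have h₂ : u ⟨j - 1, by omega⟩ < u j := hu (Fin.lt_def.2 (by simp; omega))
    omega

def boundedMonotoneEquiv (n B : ℕ) :
    {w : Fin n → ℕ // Monotone w ∧ ∀ i, w i ≤ B} ≃ (Fin n ↪o Fin (n + B)) where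
  toFun w := OrderEmbedding.ofStrictMono (fun i => ⟨w.1 i + i, by have := w.2.2 i; omega⟩)
    fun i j hij => by
      have := w.2.1 hij.le
      simp only [Fin.mk_lt_mk]
      omega
  invFun f :=
    ⟨fun i => f i - i,
      fun i j hij => by
        have := add_sub_le_of_strictMono (u := fun i => (f i : ℕ)) f.strictMono hij
        have := Fin.le_def.1 hij
        dsimp only
        omega,
      fun i => by
        have hi := i.isLt
        have := add_sub_le_of_strictMono (u := fun i => (f i : ℕ)) f.strictMono
          (show i ≤ ⟨n - 1, by omega⟩ from Fin.le_def.2 (by simp; omega))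
        have := (f ⟨n - 1, by omega⟩).isLt
        simp only at *
        omega⟩
  left_inv w := by ext i; exact Nat.add_sub_cancel (w.1 i) i
  right_inv f := by
    ext i
    have hi := i.isLt
    have := add_sub_le_of_strictMono (u := fun i => (f i : ℕ)) f.strictMono
      (show ⟨0, by omega⟩ ≤ i from Fin.le_def.2 (by simp))
    change (f i : ℕ) - i + i = f i
    simp only [Nat.sub_zero] at this
    omega

lemma card_boundedMonotone (n B : ℕ) :
    Nat.card {w : Fin n → ℕ // Monotone w ∧ ∀ i, w i ≤ B} = (n + B).choose n := by
  rw [Nat.card_congr ((boundedMonotoneEquiv n B).trans Set.powersetCard.ofFinEmbEquiv),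
    Set.powersetCard.card, Nat.card_eq_fintype_card, Fintype.card_fin]

end StarsAndBars

section Count

variable {n k : ℕ}

lemma le_peakPos_of_insertPeak_eq {w : Fin n → ℕ} (hw : Monotone w) {j : Fin (n + 1)}
    (hj : insertPeak k w j = k + 1) : j ≤ peakPos k w :=
  not_lt.1 fun h => by have := insertPeak_le_of_peakPos_lt hw h; omega

lemma eq_of_insertPeak_eq {w w' : Fin n → ℕ} (hw : Monotone w) (hb : ∀ i, w i ≤ 2 * k)
    (hw' : Monotone w') (hb' : ∀ i, w' i ≤ 2 * k) (h : insertPeak k w = insertPeak k w') :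
    w = w' := by
  have hpeak : peakPos k w = peakPos k w' :=
    le_antisymm (le_peakPos_of_insertPeak_eq hw' (h ▸ insertPeak_peakPos))
      (le_peakPos_of_insertPeak_eq hw (h.symm ▸ insertPeak_peakPos))
  funext i
  have hi := congrFun h ((peakPos k w).succAbove i)
  rw [insertPeak_succAbove, hpeak, insertPeak_succAbove] at hi
  refine eq_of_foldVal_eq (hb i) (hb' i) ?_ hi
  rw [← castSucc_lt_peakPos_iff hw, ← castSucc_lt_peakPos_iff hw', hpeak]

lemma exists_last_eq_of_le {m K : ℕ} {s : Fin m → ℕ} (hle : ∀ j, s j ≤ K + 1)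
    (hK : ∃ j, s j = K + 1) : ∃ p, s p = K + 1 ∧ ∀ j, p < j → s j ≤ K := by
  obtain ⟨p, hp, hmax⟩ := (univ.filter fun j => s j = K + 1).exists_max_image id
    (by simpa [Finset.Nonempty] using hK)
  refine ⟨p, (mem_filter.1 hp).2, fun j hj => ?_⟩
  have : s j ≠ K + 1 := fun h => (hmax j (by simp [h])).not_gt hj
  have := hle j
  omega

lemma Vnk_succ_succ (n k : ℕ) : Vnk (n + 1) (k + 1) = (n + 2 * k).choose n := by
  rw [← card_boundedMonotone]
  refine (Nat.card_eq_of_bijective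
    (fun w => ⟨insertPeak k w.1, insertPeak_pos w.2.2,
      seqValleyless_of_monotoneOn_of_antitoneOn (monotoneOn_insertPeak w.2.1)
        (antitoneOn_insertPeak w.2.1 w.2.2), insertPeak_le, _, insertPeak_peakPos⟩)
    ⟨?_, ?_⟩).symm
  · rintro ⟨w, hw, hb⟩ ⟨w', hw', hb'⟩ h
    exact Subtype.ext (eq_of_insertPeak_eq hw hb hw' hb' (congrArg Subtype.val h))
  · rintro ⟨s, hpos, hv, hle, hK⟩
    obtain ⟨p, hp, hlast⟩ := exists_last_eq_of_le hle hK
    exact ⟨⟨removePeak k p s, monotone_removePeak hv hpos hle hp hlast,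
      removePeak_le hpos hle⟩, Subtype.ext (insertPeak_removePeak hpos hle hp hlast)⟩

end Count

section PowerSeries

variable {σ R : Type*} [CommSemiring R]

lemma MvPowerSeries.coeff_add_single_X_mul (F : MvPowerSeries σ R) (d : σ →₀ ℕ) (i : σ) :
    coeff (d + Finsupp.single i 1) (X i * F) = coeff d F := by
  rw [X_def, coeff_monomial_mul, if_pos le_add_self, one_mul, add_tsub_cancel_right]

lemma MvPowerSeries.coeff_X_mul_of_eq_zero (F : MvPowerSeries σ R) {d : σ →₀ ℕ} {i : σ}
    (hd : d i = 0) : coeff d (X i * F) = 0 := by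
  rw [X_def, coeff_monomial_mul, if_neg]
  intro h
  simpa [hd] using h i

end PowerSeries

section Bivariate

open Finsupp (single)

noncomputable abbrev bidegree (a b : ℕ) : Fin 2 →₀ ℕ := single 0 a + single 1 b

lemma eq_bidegree (d : Fin 2 →₀ ℕ) : d = bidegree (d 0) (d 1) := by
  ext i; fin_cases i <;> simp

variable {R : Type*} [CommSemiring R] (F : MvPowerSeries (Fin 2) R) (a b : ℕ)

@[simp] lemma coeff_bidegree_succ_X0_mul :
    coeff (bidegree (a + 1) b) (X 0 * F) = coeff (bidegree a b) F := by
  have : bidegree (a + 1) b = bidegree a b + single 0 1 := by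
    ext i; fin_cases i <;> simp
  rw [this, coeff_add_single_X_mul]

@[simp] lemma coeff_bidegree_zero_X0_mul : coeff (bidegree 0 b) (X 0 * F) = 0 :=
  coeff_X_mul_of_eq_zero F (by simp)

@[simp] lemma coeff_bidegree_succ_X1_mul :
    coeff (bidegree a (b + 1)) (X 1 * F) = coeff (bidegree a b) F := by
  have : bidegree a (b + 1) = bidegree a b + single 1 1 := by
    ext i; fin_cases i <;> simp [add_assoc]
  rw [this, coeff_add_single_X_mul]

@[simp] lemma coeff_bidegree_zero_X1_mul : coeff (bidegree a 0) (X 1 * F) = 0 :=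
  coeff_X_mul_of_eq_zero F (by simp)

end Bivariate

noncomputable def chooseSeries : MvPowerSeries (Fin 2) ℚ :=
  fun d => ((d 0 + 2 * d 1).choose (d 0) : ℚ)

@[simp] lemma coeff_bidegree_chooseSeries (a b : ℕ) :
    coeff (bidegree a b) chooseSeries = ((a + 2 * b).choose a : ℚ) := by
  show ((_ + 2 * _).choose _ : ℚ) = _
  simp

@[simp] lemma coeff_bidegree_Vgf (a b : ℕ) :
    coeff (bidegree a b) Vgf = if 1 ≤ a ∧ 1 ≤ b then (Vnk a b : ℚ) else 0 := by
  show (if _ then _ else _) = _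
  simp

lemma Vgf_eq_X_mul_X_mul_chooseSeries : Vgf = X 0 * (X 1 * chooseSeries) := by
  ext d
  rw [eq_bidegree d]
  rcases d 0 with _ | a <;> rcases d 1 with _ | b
  all_goals simp [Vnk_succ_succ]

lemma one_sub_X_sq_mul_chooseSeries :
    (1 - X 0) ^ 2 * chooseSeries = 1 - X 0 + X 1 * chooseSeries := by
  rw [← sub_eq_zero, show (1 - X 0) ^ 2 * chooseSeries - (1 - X 0 + X 1 * chooseSeries) =
      chooseSeries - 2 • (X 0 * chooseSeries) + X 0 * (X 0 * chooseSeries) -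
        X 1 * chooseSeries - (1 - X 0 * 1) by rw [mul_one, two_smul]; ring]
  ext d
  rw [eq_bidegree d]
  rcases d 0 with _ | _ | a <;> rcases d 1 with _ | b
  all_goals simp only [map_add, map_sub, map_nsmul, coeff_bidegree_succ_X0_mul,
    coeff_bidegree_zero_X0_mul, coeff_bidegree_succ_X1_mul, coeff_bidegree_zero_X1_mul,
    coeff_bidegree_chooseSeries, coeff_one]
  case succ.succ.succ =>
    rw [show a + 1 + 1 + 2 * (b + 1) = a + 2 * b + 2 + 1 + 1 by ring,
      show a + 1 + 2 * (b + 1) = a + 2 * b + 2 + 1 by ring,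
      show a + 1 + 1 + 2 * b = a + 2 * b + 2 by ring, show a + 2 * (b + 1) = a + 2 * b + 2 by ring]
    simp [Nat.choose_succ_succ']
    ring
  all_goals simp <;> ring

lemma Vgf_mul_one_sub_X_sq :
    Vgf * (1 - X 0) ^ 2 = X 0 * X 1 * (1 - X 0) + X 1 * Vgf := by
  rw [Vgf_eq_X_mul_X_mul_chooseSeries]
  linear_combination X 0 * X 1 * one_sub_X_sq_mul_chooseSeries

/-- `V(x,y) = xy/(1-x) + y·V(x,y)/(1-x)² `, hence `V(x,y) = xy/(1 - x - y/(1-x))`. -/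
theorem valleyless_gf_functional_equation :
    Vgf = X 0 * X 1 * ((1 - X 0 : MvPowerSeries (Fin 2) ℚ))⁻¹ +
        X 1 * Vgf * (((1 - X 0 : MvPowerSeries (Fin 2) ℚ)) ^ 2)⁻¹ ∧
      Vgf = X 0 * X 1 *
        ((1 - X 0 - X 1 * ((1 - X 0 : MvPowerSeries (Fin 2) ℚ))⁻¹))⁻¹ := by
  have hinv : (1 - X 0 : MvPowerSeries (Fin 2) ℚ) * (1 - X 0)⁻¹ = 1 :=
    MvPowerSeries.mul_inv_cancel _ (by simp)
  have hinv_sq : (1 - X 0 : MvPowerSeries (Fin 2) ℚ) ^ 2 * ((1 - X 0) ^ 2)⁻¹ = 1 :=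
    MvPowerSeries.mul_inv_cancel _ (by simp)
  constructor
  · linear_combination ((1 - X 0) ^ 2)⁻¹ * Vgf_mul_one_sub_X_sq
      + (X 0 * X 1 * (1 - X 0)⁻¹ - Vgf) * hinv_sq
      - X 0 * X 1 * (1 - X 0) * ((1 - X 0) ^ 2)⁻¹ * hinv
  · rw [MvPowerSeries.eq_mul_inv_iff_mul_eq (by simp)]
    linear_combination (1 - X 0)⁻¹ * Vgf_mul_one_sub_X_sq + (X 0 * X 1 - Vgf * (1 - X 0)) * hinv
end

section
/- The sequence b_n(x,q) defined by b_0 = 0, b_1 = xq/(1-xq), and b_n(x,q) = b_{n-1}(xq,q)/(1-xq)^2 for n ≥ 2, satisfies the closed form b_n = x q^n (1 - x q^n) / ((xq)_n)^2 for all n ≥ 1, where (xq)_n = prod_{i=1}^{n} (1 - x q^i). -/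
/-- The sequence `b_n(x,q)`: `b₀ = 0`, `b₁ = xq/(1-xq)`, and
`b_n(x,q) = b_{n-1}(xq,q)/(1-xq)²` for `n ≥ 2`, in any field. -/
noncomputable def b {F : Type*} [Field F] : ℕ → F → F → F
  | 0, _, _ => 0
  | 1, x, q => x * q / (1 - x * q)
  | n + 2, x, q => b (n + 1) (x * q) q / (1 - x * q) ^ 2

lemma prod_shift {F : Type*} [Field F] (x q : F) (m : ℕ) :
    ∏ i ∈ Finset.Icc 1 (m + 2), (1 - x * q ^ i) =
      (1 - x * q) * ∏ i ∈ Finset.Icc 1 (m + 1), (1 - x * q * q ^ i) := by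
  induction m with
  | zero => simp [Finset.Icc_self, Finset.prod_Icc_succ_top]; left; ring
  | succ m ih =>
      rw [Finset.prod_Icc_succ_top (by omega), ih,
        Finset.prod_Icc_succ_top (Nat.le_add_left 1 (m+1))]
      ring

/-- Closed form: `b_n = x qⁿ (1 - x qⁿ) / ((xq)_n)²` where `(xq)_n = ∏_{i=1}^{n} (1 - x qⁱ)`,
valid whenever the factors `1 - x qⁱ` are nonzero. -/
theorem b_closed_form {F : Type*} [Field F] (x q : F) (n : ℕ) (hn : 1 ≤ n)
    (h : ∀ i ∈ Finset.Icc 1 n, (1 : F) - x * q ^ i ≠ 0) :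
    b n x q = x * q ^ n * (1 - x * q ^ n) /
      (∏ i ∈ Finset.Icc 1 n, (1 - x * q ^ i)) ^ 2 := by
  induction n generalizing x with
  | zero => omega
  | succ n ih =>
    match n with
    | 0 =>
        have h1 : (1:F) - x * q ≠ 0 := by simpa using h 1 (by simp)
        simp only [b]
        rw [Finset.Icc_self, Finset.prod_singleton]
        field_simp
        ring
    | m + 1 =>
        have h1 : (1:F) - x * q ≠ 0 := by
          simpa using h 1 (by simp)
        have h' : ∀ i ∈ Finset.Icc 1 (m+1), (1:F) - x * q * q ^ i ≠ 0 := by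
          intro i hi
          have := h (i+1) (by simp at hi ⊢; omega)
          rwa [pow_succ', ← mul_assoc] at this
        have key := ih (x * q) (by omega) h'
        have hp : ∏ i ∈ Finset.Icc 1 (m+1), ((1:F) - x * q * q ^ i) ≠ 0 :=
          Finset.prod_ne_zero_iff.mpr h'
        show b (m+1) (x*q) q / (1 - x * q) ^ 2 = _
        rw [key, prod_shift]
        rw [div_div, mul_pow, ← mul_pow]
        congr 1
        · ring
        · ring
end

section
/- For a valleyless permutation π of length n with inversion table (a_1,...,a_n) where each a_k ∈ {0, n-k}, the number of inversions i(π) = sum_k a_k; consequently the multiset {i(π) : π valleyless of length n} coincides with the multiset of subset sums of {1, 2, ..., n-1}. -/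
/-- The set `S(π) = {n-k : a_k = n-k, 1 ≤ k ≤ n-1} ⊆ {1,…,n-1}` (in 0-indexed terms,
`n-k` becomes `n - 1 - k`). -/
def Sset {n : ℕ} (π : Equiv.Perm (Fin n)) : Finset ℕ :=
  (Finset.univ.filter
      (fun k : Fin n => invTable π k = n - 1 - k.val ∧ 0 < n - 1 - k.val)).image
    (fun k : Fin n => n - 1 - k.val)

/-!
A valleyless word is unimodal: for some set `D` of symbols it lists the symbols outside `D` in
increasing order and then those in `D` in decreasing order, i.e. it sorts the symbols by the key
`k ↦ k` off `D`, `k ↦ 2n - k` on `D`. In such a word all larger symbols precede `k` when `k ∈ D`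
and all follow it otherwise, so the inversion-table entry of `k` is `n - 1 - k` or `0`, and `D`
(hence the word) is recovered from the table. Conversely the sorting permutation of every such
key is valleyless, which gives surjectivity.
-/

open Finset

section SortedPerm

variable {n : ℕ} {α : Type*} [LinearOrder α]

theorem Equiv.Perm.symm_lt_symm_iff_of_strictMono {f : Fin n → α} {σ : Equiv.Perm (Fin n)}
    (hσ : StrictMono (f ∘ σ)) (a b : Fin n) : σ.symm a < σ.symm b ↔ f a < f b := by
  simpa using (hσ.lt_iff_lt (a := σ.symm a) (b := σ.symm b)).symm

theorem Equiv.Perm.eq_of_strictMono_comp {f : Fin n → α} {σ τ : Equiv.Perm (Fin n)}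
    (hσ : StrictMono (f ∘ σ)) (hτ : StrictMono (f ∘ τ)) : σ = τ := by
  have sorted {ρ : Equiv.Perm (Fin n)} (hρ : StrictMono (f ∘ ρ)) : ρ = Tuple.sort f :=
    Tuple.eq_sort_iff.2 ⟨hρ.monotone, fun _ _ hij hf => absurd hf (hρ hij).ne⟩
  rw [sorted hσ, sorted hτ]

end SortedPerm

variable {n : ℕ}

theorem invNum_eq_sum_invTable (π : Equiv.Perm (Fin n)) :
    invNum π = ∑ k : Fin n, invTable π k := by
  rw [← Equiv.sum_comp π]
  simp only [invNum, invTable, card_filter, Fintype.sum_prod_type, Equiv.symm_apply_apply]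
  exact sum_comm

theorem invTable_eq_card_filter_Ioi (π : Equiv.Perm (Fin n)) (k : Fin n) :
    invTable π k = #{l ∈ Ioi k | π.symm l < π.symm k} :=
  card_equiv π fun i => by simp [and_comm]

theorem invTable_eq_iff (π : Equiv.Perm (Fin n)) (k : Fin n) :
    invTable π k = n - 1 - k ↔ ∀ l, k < l → π.symm l < π.symm k := by
  rw [invTable_eq_card_filter_Ioi, ← Fin.card_Ioi, card_filter_eq_iff]
  simp only [mem_Ioi]

def invTableSaturated (π : Equiv.Perm (Fin n)) : Finset (Fin n) :=
  {k | invTable π k = n - 1 - k ∧ 0 < n - 1 - k}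

/-- The word of `σ` is unimodal with descending part `D` iff `unimodalKey D ∘ σ` is increasing. -/
def unimodalKey (D : Finset (Fin n)) (k : Fin n) : ℕ :=
  if k ∈ D then 2 * n - k else k

section UnimodalKey

variable (D : Finset (Fin n))

theorem unimodalKey_of_mem {k : Fin n} (hk : k ∈ D) : unimodalKey D k = 2 * n - k := if_pos hk

theorem unimodalKey_of_notMem {k : Fin n} (hk : k ∉ D) : unimodalKey D k = k := if_neg hk

theorem le_unimodalKey (k : Fin n) : (k : ℕ) ≤ unimodalKey D k := by
  unfold unimodalKey; split_ifs <;> omega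

theorem unimodalKey_le (k : Fin n) : unimodalKey D k ≤ 2 * n - k := by
  unfold unimodalKey; split_ifs <;> omega

theorem unimodalKey_injective : Function.Injective (unimodalKey D) := by
  intro k l h
  unfold unimodalKey at h
  split_ifs at h <;> omega

end UnimodalKey

theorem permValleyless_of_strictMono {D : Finset (Fin n)} {σ : Equiv.Perm (Fin n)}
    (hσ : StrictMono (unimodalKey D ∘ σ)) : PermValleyless σ := by
  intro i j k hij hjk
  by_contra! hvalley
  obtain ⟨hji, hjk'⟩ := lt_min_iff.1 hvalley
  have hkey_ij := hσ hij
  have hkey_jk := hσ hjk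
  simp only [Function.comp_apply, unimodalKey] at hkey_ij hkey_jk
  split_ifs at hkey_ij hkey_jk <;> omega

theorem invTable_of_strictMono {D : Finset (Fin n)} {σ : Equiv.Perm (Fin n)}
    (hσ : StrictMono (unimodalKey D ∘ σ)) (k : Fin n) :
    invTable σ k = if k ∈ D then n - 1 - k else 0 := by
  simp only [invTable_eq_card_filter_Ioi, Equiv.Perm.symm_lt_symm_iff_of_strictMono hσ]
  split_ifs with hk
  · rw [filter_true_of_mem, Fin.card_Ioi]
    intro l hl
    rw [mem_Ioi, Fin.lt_def] at hl
    rw [unimodalKey_of_mem D hk]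
    have := unimodalKey_le D l
    omega
  · rw [filter_false_of_mem, card_empty]
    intro l hl
    rw [mem_Ioi, Fin.lt_def] at hl
    rw [unimodalKey_of_notMem D hk, not_lt]
    have := le_unimodalKey D l
    omega

theorem invTableSaturated_of_strictMono {D : Finset (Fin n)} {σ : Equiv.Perm (Fin n)}
    (hσ : StrictMono (unimodalKey D ∘ σ)) :
    invTableSaturated σ = {k ∈ D | 0 < n - 1 - k.val} := by
  ext k
  simp only [invTableSaturated, mem_filter, mem_univ, true_and, invTable_of_strictMono hσ]
  split_ifs with hk
  · simp [hk]
  · simp only [hk, false_and, iff_false, not_and]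
    omega

theorem notMem_invTableSaturated_of_lt {π : Equiv.Perm (Fin n)} {a b : Fin n} (hab : a < b)
    (hpos : π.symm a < π.symm b) : a ∉ invTableSaturated π := by
  simp only [invTableSaturated, mem_filter, mem_univ, true_and, invTable_eq_iff]
  exact fun h => (h.1 b hab).not_gt hpos

theorem mem_invTableSaturated_of_lt {π : Equiv.Perm (Fin n)} (hπ : PermValleyless π)
    {a b : Fin n} (hab : a < b) (hpos : π.symm b < π.symm a) : a ∈ invTableSaturated π := by
  simp only [invTableSaturated, mem_filter, mem_univ, true_and, invTable_eq_iff]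
  refine ⟨fun l hl => ?_, by omega⟩
  by_contra! hafter
  have hne : π.symm a ≠ π.symm l := π.symm.injective.ne hl.ne
  have hvalley := hπ _ _ _ hpos (lt_of_le_of_ne hafter hne)
  simp only [Equiv.apply_symm_apply] at hvalley
  exact (lt_min hab hl).not_ge hvalley

theorem strictMono_of_permValleyless {π : Equiv.Perm (Fin n)} (hπ : PermValleyless π) :
    StrictMono (unimodalKey (invTableSaturated π) ∘ π) := by
  intro i j hij
  have hpos : π.symm (π i) < π.symm (π j) := by simpa using hij
  simp only [Function.comp_apply]
  rcases lt_or_gt_of_ne (π.injective.ne hij.ne) with hlt | hgt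
  · rw [unimodalKey_of_notMem _ (notMem_invTableSaturated_of_lt hlt hpos)]
    have := le_unimodalKey (invTableSaturated π) (π j)
    rw [Fin.lt_def] at hlt
    omega
  · rw [unimodalKey_of_mem _ (mem_invTableSaturated_of_lt hπ hgt hpos)]
    have := unimodalKey_le (invTableSaturated π) (π i)
    rw [Fin.lt_def] at hgt
    omega

theorem Sset_eq_image (π : Equiv.Perm (Fin n)) :
    Sset π = (invTableSaturated π).image (fun k : Fin n => n - 1 - k.val) := rfl

theorem Sset_subset_Icc (π : Equiv.Perm (Fin n)) : Sset π ⊆ Icc 1 (n - 1) := by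
  intro s hs
  obtain ⟨k, hk, rfl⟩ := mem_image.1 hs
  rw [mem_Icc]
  simp only [mem_filter, mem_univ, true_and] at hk
  omega

theorem Fin.sub_one_sub_val_injective : Function.Injective (fun k : Fin n => n - 1 - k.val) := by
  intro k l h
  have := k.isLt
  have := l.isLt
  exact Fin.ext (by simp only at h; omega)

theorem eq_of_Sset_eq {π π' : Equiv.Perm (Fin n)} (hπ : PermValleyless π)
    (hπ' : PermValleyless π') (h : Sset π = Sset π') : π = π' := by
  have hsat : invTableSaturated π = invTableSaturated π' :=
    image_injective Fin.sub_one_sub_val_injective h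
  have hπ'_mono := strictMono_of_permValleyless hπ'
  rw [← hsat] at hπ'_mono
  exact Equiv.Perm.eq_of_strictMono_comp (strictMono_of_permValleyless hπ) hπ'_mono

theorem exists_permValleyless_Sset_eq {S : Finset ℕ} (hS : S ⊆ Icc 1 (n - 1)) :
    ∃ σ : Equiv.Perm (Fin n), PermValleyless σ ∧ Sset σ = S := by
  set D : Finset (Fin n) := {k | n - 1 - k.val ∈ S}
  have hσ : StrictMono (unimodalKey D ∘ Tuple.sort (unimodalKey D)) :=
    (Tuple.monotone_sort _).strictMono_of_injective
      ((unimodalKey_injective D).comp (Tuple.sort _).injective)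
  refine ⟨_, permValleyless_of_strictMono hσ, ?_⟩
  ext s
  simp only [Sset_eq_image, invTableSaturated_of_strictMono hσ, D, mem_image, mem_filter,
    mem_univ, true_and]
  constructor
  · rintro ⟨k, ⟨hk, -⟩, rfl⟩
    exact hk
  · intro hs
    have hs' := mem_Icc.1 (hS hs)
    refine ⟨⟨n - 1 - s, by omega⟩, ?_, by simp only; omega⟩
    simp only [show n - 1 - (n - 1 - s) = s by omega]
    exact ⟨hs, by omega⟩

theorem invNum_eq_sum_Sset {π : Equiv.Perm (Fin n)} (hπ : PermValleyless π) :
    invNum π = (Sset π).sum id := by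
  have hmono := strictMono_of_permValleyless hπ
  rw [invNum_eq_sum_invTable, Sset_eq_image,
    sum_image fun _ _ _ _ h => Fin.sub_one_sub_val_injective h]
  simp only [invTable_of_strictMono hmono, sum_ite_mem, univ_inter, id]

theorem valleyless_inversions_subset_sums_general (n : ℕ) :
    (∀ π : Equiv.Perm (Fin n), invNum π = ∑ k : Fin n, invTable π k) ∧
    Set.BijOn (fun π => Sset π) {π : Equiv.Perm (Fin n) | PermValleyless π}
      {S : Finset ℕ | S ⊆ Finset.Icc 1 (n - 1)} ∧
    (∀ π : Equiv.Perm (Fin n), PermValleyless π → invNum π = (Sset π).sum id) :=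
  ⟨invNum_eq_sum_invTable,
    ⟨fun π _ => Sset_subset_Icc π, fun _ hπ _ hπ' h => eq_of_Sset_eq hπ hπ' h,
      fun _ hS => exists_permValleyless_Sset_eq hS⟩,
    fun _ hπ => invNum_eq_sum_Sset hπ⟩

/-- The inversion number is the sum of the inversion table; the map `π ↦ S(π)` is a
bijection from the valleyless permutations of length `n` onto the subsets of `{1,…,n-1}`,
and for valleyless `π` the inversion number equals the sum of the elements of `S(π)`.
Consequently the multiset of inversion numbers of valleyless permutations coincides with
the multiset of subset sums of `{1,…,n-1}`. -/
theorem valleyless_inversions_subset_sums (n : ℕ) (hn : 1 ≤ n) :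
    (∀ π : Equiv.Perm (Fin n), invNum π = ∑ k : Fin n, invTable π k) ∧
    Set.BijOn (fun π => Sset π) {π : Equiv.Perm (Fin n) | PermValleyless π}
      {S : Finset ℕ | S ⊆ Finset.Icc 1 (n - 1)} ∧
    (∀ π : Equiv.Perm (Fin n), PermValleyless π → invNum π = (Sset π).sum id) :=
  valleyless_inversions_subset_sums_general n
end

section
/- For n ≥ 1, the number of valleyless sequences of length n with maximum entry 2 is the triangular number C(n+1, 2) = n(n+1)/2. -/
section aux

variable {n : ℕ}

private def VP (s : Fin n → ℕ) : Prop :=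
  (∀ i, 1 ≤ s i ∧ s i ≤ 2) ∧ SeqValleyless s ∧ (∃ i, s i = 2)

private def twoSet (s : Fin n → ℕ) : Finset (Fin n) :=
  Finset.univ.filter (fun i => s i = 2)

private lemma twoSet_nonempty {s : Fin n → ℕ} (hs : VP s) : (twoSet s).Nonempty := by
  obtain ⟨i, hi⟩ := hs.2.2
  exact ⟨i, by simp [twoSet, hi]⟩

private lemma mem_twoSet {s : Fin n → ℕ} {i : Fin n} : i ∈ twoSet s ↔ s i = 2 := by
  simp [twoSet]

private lemma key_s19 {s : Fin n → ℕ} (hs : VP s) (i : Fin n) :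
    s i = 2 ↔ (twoSet s).min' (twoSet_nonempty hs) ≤ i ∧
      i ≤ (twoSet s).max' (twoSet_nonempty hs) := by
  set a := (twoSet s).min' (twoSet_nonempty hs) with ha
  set b := (twoSet s).max' (twoSet_nonempty hs) with hb
  have hsa : s a = 2 := mem_twoSet.1 (Finset.min'_mem _ _)
  have hsb : s b = 2 := mem_twoSet.1 (Finset.max'_mem _ _)
  constructor
  · intro h
    exact ⟨Finset.min'_le _ _ (mem_twoSet.2 h), Finset.le_max' _ _ (mem_twoSet.2 h)⟩
  · rintro ⟨h1, h2⟩
    rcases eq_or_lt_of_le h1 with h1 | h1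
    · rw [← h1]; exact hsa
    rcases eq_or_lt_of_le h2 with h2 | h2
    · rw [h2]; exact hsb
    have := hs.2.1 a i b h1 h2
    rw [hsa, hsb] at this
    have := (hs.1 i).2
    omega

private def indFun (p : {p : Fin n × Fin n // p.1 ≤ p.2}) : Fin n → ℕ :=
  fun i => if p.1.1 ≤ i ∧ i ≤ p.1.2 then 2 else 1

private lemma indFun_mem (p : {p : Fin n × Fin n // p.1 ≤ p.2}) : VP (indFun p) := by
  refine ⟨fun i => ?_, fun i j k hij hjk => ?_, ⟨p.1.1, ?_⟩⟩
  · unfold indFun; split <;> omega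
  · unfold indFun
    by_cases ci : p.1.1 ≤ i ∧ i ≤ p.1.2 <;>
      by_cases ck : p.1.1 ≤ k ∧ k ≤ p.1.2 <;>
      by_cases cj : p.1.1 ≤ j ∧ j ≤ p.1.2 <;>
      simp [ci, ck, cj]
    exact cj ⟨le_trans ci.1 hij.le, le_trans hjk.le ck.2⟩
  · simp [indFun, p.2]

private lemma twoSet_indFun (p : {p : Fin n × Fin n // p.1 ≤ p.2}) :
    twoSet (indFun p) = Finset.Icc p.1.1 p.1.2 := by
  ext i
  simp only [mem_twoSet, Finset.mem_Icc, indFun]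
  split <;> rename_i h <;> simp_all

private def vEquiv : {s : Fin n → ℕ // VP s} ≃ {p : Fin n × Fin n // p.1 ≤ p.2} where
  toFun s := ⟨⟨(twoSet s.1).min' (twoSet_nonempty s.2),
      (twoSet s.1).max' (twoSet_nonempty s.2)⟩,
      Finset.min'_le (twoSet s.1) ((twoSet s.1).max' (twoSet_nonempty s.2))
        (Finset.max'_mem _ _)⟩
  invFun p := ⟨indFun p, indFun_mem p⟩
  left_inv s := by
    ext i
    have h12 := (s.2.1 i)
    simp only [indFun]
    split <;> rename_i h
    · exact ((key_s19 s.2 i).2 h).symm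
    · have h2 : s.1 i ≠ 2 := fun hh => h ((key_s19 s.2 i).1 hh)
      omega
  right_inv p := by
    have h := twoSet_indFun p
    have hmem : p.1.1 ∈ twoSet (indFun p) := by
      rw [h]; exact Finset.mem_Icc.2 ⟨le_refl _, p.2⟩
    have hmem2 : p.1.2 ∈ twoSet (indFun p) := by
      rw [h]; exact Finset.mem_Icc.2 ⟨p.2, le_refl _⟩
    apply Subtype.ext
    apply Prod.ext
    · apply le_antisymm
      · exact Finset.min'_le _ _ hmem
      · exact Finset.le_min' _ ⟨_, hmem⟩ _ (fun y hy => (Finset.mem_Icc.1 (h ▸ hy)).1)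
    · apply le_antisymm
      · exact Finset.max'_le _ ⟨_, hmem⟩ _ (fun y hy => (Finset.mem_Icc.1 (h ▸ hy)).2)
      · exact Finset.le_max' _ _ hmem2

end aux

/-- For `n ≥ 1`, the number of valleyless sequences of length `n` with entries in `{1,2}`
and maximum entry exactly `2` is the triangular number `C(n+1,2) = n(n+1)/2`. -/
theorem valleyless_count_max_two (n : ℕ) (hn : 1 ≤ n) :
    Nat.card {s : Fin n → ℕ // (∀ i, 1 ≤ s i ∧ s i ≤ 2) ∧ SeqValleyless s ∧
        (∃ i, s i = 2)} = Nat.choose (n + 1) 2 ∧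
    Nat.choose (n + 1) 2 = n * (n + 1) / 2 := by
  constructor
  · have e1 : {s : Fin n → ℕ // (∀ i, 1 ≤ s i ∧ s i ≤ 2) ∧ SeqValleyless s ∧
        (∃ i, s i = 2)} ≃ Sym2 (Fin n) := vEquiv.trans Sym2.sortEquiv.symm
    rw [Nat.card_eq_of_equiv_fin (e1.trans (Fintype.equivFin _))]
    rw [Sym2.card, Fintype.card_fin]
  · rw [Nat.choose_two_right, Nat.add_sub_cancel, Nat.mul_comm]
end
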